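/- arXiv:1906.04882 — 11 statements merged into one kernel-verified Lean document; each statement's English description precedes it below -/
import Mathlib

section
/- Let k be a field, (P, ⊥) a poset with an order-reversing involution, and φ a symplectically indecomposable symplectic representation of (P, ⊥) in a finite-dimensional symplectic space (V, ω) over k. If f is an endomorphism of the underlying linear representation of φ satisfying fᵗ = f or fᵗ = −f, then f is nilpotent or bijective. -/
/-! For `n` large, `V = ker fⁿ ⊕ range fⁿ` (Fitting), with both summands independent of `n`.
Since `fᵗ = ±f`, `range fⁿ` is the `ω`-orthogonal of `ker fⁿ`, and every `f`-invariant subspace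
splits along the decomposition (apply Fitting to the restriction of `f`). So it is a symplectic
decomposition of `φ`, and one summand vanishes: `ker fⁿ = 0` makes `f` bijective, `range fⁿ = 0`
makes `f` nilpotent. -/

open LinearMap (ker range IsAdjointPair)

section Fitting

variable {R M : Type*} [Ring R] [AddCommGroup M] [Module R M] [IsArtinian R M] (f : Module.End R M)

theorem Submodule.eq_inf_iSup_ker_pow_sup_inf_iInf_range_pow [IsNoetherian R M]
    {W : Submodule R M} (hW : W.map f ≤ W) :
    W = (W ⊓ ⨆ n, ker (f ^ n)) ⊔ (W ⊓ ⨅ n, range (f ^ n)) := by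
  have hWf : ∀ x ∈ W, f x ∈ W := fun x hx => hW ⟨x, hx, rfl⟩
  set g := f.restrict hWf
  have hg (n : ℕ) (y : W) : ((g ^ n) y : M) = (f ^ n) y := by
    rw [Module.End.pow_restrict]; rfl
  obtain ⟨m, hcompl, hrange⟩ :=
    (g.eventually_isCompl_ker_pow_range_pow.and g.eventually_iInf_range_pow_eq).exists
  refine le_antisymm (fun x hx => ?_) (sup_le inf_le_left inf_le_left)
  obtain ⟨a, ha, b, hb, hab⟩ :=
    Submodule.mem_sup.mp (hcompl.codisjoint.eq_top ▸ Submodule.mem_top : (⟨x, hx⟩ : W) ∈ _)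
  rw [← show (a : M) + b = x from congrArg Subtype.val hab]
  refine Submodule.add_mem_sup ⟨a.2, Submodule.mem_iSup_of_mem m ?_⟩ ⟨b.2, ?_⟩
  · rw [LinearMap.mem_ker, ← hg, LinearMap.mem_ker.mp ha, Submodule.coe_zero]
  · refine Submodule.mem_iInf _ |>.mpr fun n => ?_
    obtain ⟨c, rfl⟩ := (hrange ▸ iInf_le _ n : range (g ^ m) ≤ range (g ^ n)) hb
    exact ⟨c, (hg n c).symm⟩

theorem LinearMap.bijective_of_iSup_ker_pow_eq_bot (h : ⨆ n, ker (f ^ n) = ⊥) :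
    Function.Bijective f := by
  refine IsArtinian.bijective_of_injective_endomorphism f (LinearMap.ker_eq_bot.mp ?_)
  exact le_bot_iff.mp (h ▸ pow_one f ▸ le_iSup (fun n => ker (f ^ n)) 1)

theorem LinearMap.isNilpotent_of_iInf_range_pow_eq_bot (h : ⨅ n, range (f ^ n) = ⊥) :
    IsNilpotent f := by
  obtain ⟨n, hn⟩ := f.eventually_iInf_range_pow_eq.exists
  exact ⟨n, LinearMap.range_eq_bot.mp (hn ▸ h)⟩

end Fitting

section Adjoint

variable {R M N : Type*} [CommRing R] [AddCommGroup M] [Module R M] [AddCommGroup N] [Module R N]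
  {B : M →ₗ[R] M →ₗ[R] N}

theorem LinearMap.IsAdjointPair.pow {f g : Module.End R M} (h : IsAdjointPair B B f g) (n : ℕ) :
    IsAdjointPair B B ⇑(f ^ n) ⇑(g ^ n) := by
  induction n with
  | zero => exact LinearMap.isAdjointPair_one
  | succ n ih => rw [pow_succ, pow_succ']; exact ih.mul h

end Adjoint

section Orthogonal

variable {K V : Type*} [Field K] [AddCommGroup V] [Module K V] [FiniteDimensional K V]
  {B : LinearMap.BilinForm K V}

theorem LinearMap.BilinForm.orthogonal_flip_ker_eq_range (hB : B.Nondegenerate)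
    {f g : Module.End K V} (h : IsAdjointPair B B f g) (hg : ker g = ker f) :
    B.flip.orthogonal (ker f) = range f := by
  refine (Submodule.eq_of_le_of_finrank_eq ?_ ?_).symm
  · rintro _ ⟨x, rfl⟩ a ha
    change B (f x) a = 0
    rw [h, LinearMap.mem_ker.mp (hg ▸ ha : a ∈ ker g), map_zero]
  · rw [finrank_orthogonal hB.flip, ← f.finrank_range_add_finrank_ker, Nat.add_sub_cancel]

theorem LinearMap.BilinForm.orthogonal_flip_ker_pow_eq_range_pow (hB : B.Nondegenerate)
    {f : Module.End K V} (hf : LinearMap.IsSelfAdjoint B f ∨ LinearMap.IsSkewAdjoint B f)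
    (n : ℕ) : B.flip.orthogonal (ker (f ^ n)) = range (f ^ n) := by
  rcases hf with hf | hf
  · exact orthogonal_flip_ker_eq_range hB (IsAdjointPair.pow hf n) rfl
  · refine orthogonal_flip_ker_eq_range hB (IsAdjointPair.pow (g := -f) hf n) ?_
    rcases neg_one_pow_eq_or (Module.End K V) n with h | h <;> simp [neg_pow, h]

theorem LinearMap.BilinForm.orthogonal_flip_iSup_ker_pow_eq_iInf_range_pow (hB : B.Nondegenerate)
    {f : Module.End K V} (hf : LinearMap.IsSelfAdjoint B f ∨ LinearMap.IsSkewAdjoint B f) :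
    B.flip.orthogonal (⨆ n, ker (f ^ n)) = ⨅ n, range (f ^ n) := by
  obtain ⟨n, hker, hrange⟩ :=
    (f.eventually_iSup_ker_pow_eq.and f.eventually_iInf_range_pow_eq).exists
  rw [hker, hrange, orthogonal_flip_ker_pow_eq_range_pow hB hf]

end Orthogonal

theorem symplectic_fitting_lemma_general
    {k V P : Type*} [Field k] [AddCommGroup V] [Module k V] [FiniteDimensional k V]
    (ω : LinearMap.BilinForm k V)
    (hnd : LinearMap.BilinForm.Nondegenerate ω)
    (φ : P → Submodule k V)
    (hindec : ∀ U' U'' : Submodule k V,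
      U'' = LinearMap.BilinForm.orthogonal ω.flip U' → IsCompl U' U'' →
      (∀ p, φ p = (φ p ⊓ U') ⊔ (φ p ⊓ U'')) → U' = ⊥ ∨ U'' = ⊥)
    (f : V →ₗ[k] V) (hend : ∀ p, (φ p).map f ≤ φ p)
    (hself : (∀ x y : V, ω (f x) y = ω x (f y)) ∨ (∀ x y : V, ω (f x) y = - ω x (f y))) :
    IsNilpotent f ∨ Function.Bijective f := by
  have hadj : LinearMap.IsSelfAdjoint ω f ∨ LinearMap.IsSkewAdjoint ω f :=
    hself.imp id fun h x y => by rw [h, Pi.neg_apply, map_neg]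
  rcases hindec _ _ (ω.orthogonal_flip_iSup_ker_pow_eq_iInf_range_pow hnd hadj).symm
      f.isCompl_iSup_ker_pow_iInf_range_pow
      (fun p => (φ p).eq_inf_iSup_ker_pow_sup_inf_iInf_range_pow f (hend p)) with h | h
  · exact Or.inr (f.bijective_of_iSup_ker_pow_eq_bot h)
  · exact Or.inl (f.isNilpotent_of_iInf_range_pow_eq_bot h)

/-- (Symplectic Fitting lemma.)  Let `φ` be a symplectically
indecomposable symplectic representation of a poset with order-reversing involution
`(P, ⊥)` in a finite-dimensional symplectic space `(V, ω)` over a field `k`.  If `f` is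
an endomorphism of the underlying linear representation satisfying `fᵗ = f` or
`fᵗ = −f`, then `f` is nilpotent or bijective.

Here the symplectic orthogonal `A^⊥ = {v : ω(v, a) = 0 ∀ a ∈ A}` is
`(ω.flip).orthogonal A`, and transposes are expressed by the defining identity
`ω (f x) y = ω x (fᵗ y)`. -/
theorem symplectic_fitting_lemma
    {k V P : Type*} [Field k] [AddCommGroup V] [Module k V] [FiniteDimensional k V]
    [PartialOrder P]
    (invol : P → P) (hinv : Function.Involutive invol) (hanti : Antitone invol)
    (ω : LinearMap.BilinForm k V) (halt : LinearMap.IsAlt ω)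
    (hnd : LinearMap.BilinForm.Nondegenerate ω)
    (φ : P → Submodule k V) (hmono : Monotone φ)
    (hsymp : ∀ p, φ (invol p) = LinearMap.BilinForm.orthogonal ω.flip (φ p))
    (hindec : ∀ U' U'' : Submodule k V,
      U'' = LinearMap.BilinForm.orthogonal ω.flip U' → IsCompl U' U'' →
      (∀ p, φ p = (φ p ⊓ U') ⊔ (φ p ⊓ U'')) → U' = ⊥ ∨ U'' = ⊥)
    (f : V →ₗ[k] V) (hend : ∀ p, (φ p).map f ≤ φ p)
    (hself : (∀ x y : V, ω (f x) y = ω x (f y)) ∨ (∀ x y : V, ω (f x) y = - ω x (f y))) :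
    IsNilpotent f ∨ Function.Bijective f :=
  symplectic_fitting_lemma_general ω hnd φ hindec f hend hself
end

section
/- Let k be a field of characteristic ≠ 2, (P, ⊥) a poset with an order-reversing involution, and ψ an indecomposable linear representation of P in a finite-dimensional k-vector space V. Then ψ is isomorphic to its dual representation ψ* if and only if there exists a compatible form for ψ. -/
open Module Submodule LinearMap LinearMap.BilinForm

section FittingDecomposition

variable {k V : Type*} [Field k] [AddCommGroup V] [Module k V] [FiniteDimensional k V]

def IsIndecomposable {P : Type*} (ψ : P → Submodule k V) : Prop :=
  ∀ U' U'' : Submodule k V, IsCompl U' U'' →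
    (∀ p, ψ p = (ψ p ⊓ U') ⊔ (ψ p ⊓ U'')) → U' = ⊥ ∨ U'' = ⊥

/-- `f` is injective on `p ⊓ range f`, hence onto it, so `f x = f y` for some `y` there and then
`x - y ∈ p ⊓ ker f`. -/
lemma inf_ker_sup_inf_range_eq_of_isCompl {f : End k V} (hf : IsCompl (ker f) (range f))
    {p : Submodule k V} (hp : ∀ x ∈ p, f x ∈ p) : p ⊓ ker f ⊔ p ⊓ range f = p := by
  refine le_antisymm (sup_le inf_le_left inf_le_left) fun x hx => ?_
  have hq : ∀ y ∈ p ⊓ range f, f y ∈ p ⊓ range f := fun y hy => ⟨hp y hy.1, mem_range_self f y⟩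
  have hinj : Function.Injective (f.restrict hq) := by
    refine (injective_iff_map_eq_zero _).mpr fun y hy => Subtype.ext ?_
    exact (mem_bot k).mp (hf.disjoint.le_bot ⟨congrArg Subtype.val hy, y.2.2⟩)
  obtain ⟨y, hy⟩ := injective_iff_surjective.mp hinj ⟨f x, hp x hx, mem_range_self f x⟩
  have hxy : x - y ∈ p ⊓ ker f := by
    refine ⟨sub_mem hx y.2.1, ?_⟩
    rw [SetLike.mem_coe, mem_ker, map_sub, ← coe_restrict_apply hq, hy, sub_self]
  simpa using add_mem_sup hxy y.2

/-- Apply the previous lemma to `f = e ^ (n + 1)`, with `n` past the point where the Fitting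
decomposition of `e` stabilises. -/
lemma IsIndecomposable.isUnit_or_isNilpotent {P : Type*} {ψ : P → Submodule k V}
    (hψ : IsIndecomposable ψ) {e : End k V} (he : ∀ p, ∀ x ∈ ψ p, e x ∈ ψ p) :
    IsUnit e ∨ IsNilpotent e := by
  obtain ⟨n, hn⟩ := Filter.eventually_atTop.mp e.eventually_isCompl_ker_pow_range_pow
  have hc := hn (n + 1) n.le_succ
  rcases hψ _ _ hc fun p =>
      (inf_ker_sup_inf_range_eq_of_isCompl hc (End.pow_apply_mem_of_forall_mem _ (he p))).symm
    with hker | hrange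
  · refine .inl ((isUnit_iff_ker_eq_bot e).mpr (eq_bot_iff.mpr ?_))
    rw [← hker, pow_succ]
    exact ker_le_ker_comp e (e ^ n)
  · exact .inr ⟨n + 1, range_eq_bot.mp hrange⟩

end FittingDecomposition

lemma isUnit_one_add_of_isNilpotent_one_sub {A : Type*} [Ring A] (h2 : IsUnit (2 : A)) {a : A}
    (ha : IsNilpotent (1 - a)) : IsUnit (1 + a) := by
  have h : 1 + a = 2 + -(1 - a) := by rw [neg_sub, ← one_add_one_eq_two]; abel
  rw [h]
  exact ha.neg.isUnit_add_left_of_commute h2 (Commute.ofNat_right _ 2)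

namespace LinearMap.BilinForm

variable {k V : Type*} [Field k] [AddCommGroup V] [Module k V] {B : LinearMap.BilinForm k V}

lemma mem_orthogonal_iff_of_isRefl (hB : B.IsRefl) {W : Submodule k V} {v : V} :
    v ∈ B.orthogonal W ↔ ∀ w ∈ W, B v w = 0 := by
  simp only [mem_orthogonal_iff, hB.eq_iff]

variable [FiniteDimensional k V]

lemma map_eq_dualAnnihilator_iff_orthogonal_eq (B : LinearMap.BilinForm k V)
    (W U : Submodule k V) :
    W.map B = U.dualAnnihilator ↔ B.orthogonal W = U := by
  have h : (W.map B).dualCoannihilator = B.orthogonal W := by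
    ext v
    simp [mem_dualCoannihilator]
  constructor
  · intro hW
    rw [← h, hW, Subspace.dualAnnihilator_dualCoannihilator_eq]
  · intro hW
    rw [← hW, ← h, Subspace.dualCoannihilator_dualAnnihilator_eq]

lemma Nondegenerate.comp_of_isUnit (hB : B.Nondegenerate) {e : End k V} (he : IsUnit e) :
    Nondegenerate (B ∘ₗ e) := by
  rw [nondegenerate_iff_ker_eq_bot, ker_comp_of_ker_eq_bot _ hB.ker_eq_bot]
  exact (isUnit_iff_ker_eq_bot e).mp he

lemma orthogonal_eq_of_le {B' : LinearMap.BilinForm k V} (hB : B.Nondegenerate)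
    (hB' : B'.Nondegenerate) {W : Submodule k V} (h : B.orthogonal W ≤ B'.orthogonal W) :
    B.orthogonal W = B'.orthogonal W :=
  eq_of_le_of_finrank_eq h (by rw [finrank_orthogonal hB, finrank_orthogonal hB'])

variable {P : Type*} {invol : P → P} {ψ : P → Submodule k V}

lemma orthogonal_flip_eq (hinv : Function.Involutive invol) (hB : B.Nondegenerate)
    (h : ∀ p, B.orthogonal (ψ p) = ψ (invol p)) (p : P) :
    B.flip.orthogonal (ψ p) = ψ (invol p) := by
  rw [← h p]
  refine (orthogonal_eq_of_le hB hB.flip fun u hu w hw => ?_).symm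
  have hw' : w ∈ B.orthogonal (ψ (invol p)) := by rwa [h, hinv p]
  exact hw' u (by rwa [h p] at hu)

lemma apply_mem_of_comp_eq_flip (hinv : Function.Involutive invol) (hB : B.Nondegenerate)
    (h : ∀ p, B.orthogonal (ψ p) = ψ (invol p)) {f : End k V} (hf : B ∘ₗ f = B.flip) (p : P) :
    ∀ x ∈ ψ p, f x ∈ ψ p := by
  intro x hx
  have hp : ψ p = B.flip.orthogonal (ψ (invol p)) := by rw [orthogonal_flip_eq hinv hB h, hinv p]
  have hx' : x ∈ B.orthogonal (ψ (invol p)) := by rwa [h, hinv p]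
  rw [hp]
  intro n hn
  rw [flip_apply, show B (f x) n = (B ∘ₗ f) x n from rfl, hf, flip_apply]
  exact hx' n hn

lemma orthogonal_add_smul_flip (hinv : Function.Involutive invol) (hB : B.Nondegenerate)
    (h : ∀ p, B.orthogonal (ψ p) = ψ (invol p)) {c : k} (hc : (B + c • B.flip).Nondegenerate)
    (p : P) : (B + c • B.flip).orthogonal (ψ p) = ψ (invol p) := by
  rw [← h p]
  refine (orthogonal_eq_of_le hB hc fun u hu w hw => ?_).symm
  have hu' : u ∈ B.flip.orthogonal (ψ p) := by rwa [orthogonal_flip_eq hinv hB h, ← h]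
  simp [hu w hw, show B u w = 0 from hu' w hw]

/-- With `f` defined by `B (f x) y = B y x`, the forms `B ± B.flip = B ∘ (1 ± f)` are symmetric
and alternating, and they inherit the orthogonality relations of `B`.  Since `f` preserves every
`ψ p`, Fitting's lemma makes `1 - f` invertible or nilpotent; in the latter case
`1 + f = 2 - (1 - f)` is invertible, so one of the two forms is nondegenerate. -/
theorem exists_isSymm_or_isAlt_orthogonal_eq (h2 : (2 : k) ≠ 0)
    (hinv : Function.Involutive invol) (hψ : IsIndecomposable ψ) (hB : B.Nondegenerate)
    (h : ∀ p, B.orthogonal (ψ p) = ψ (invol p)) :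
    ∃ B' : LinearMap.BilinForm k V, B'.Nondegenerate ∧
      (LinearMap.IsSymm B' ∨ LinearMap.IsAlt B') ∧ ∀ p, B'.orthogonal (ψ p) = ψ (invol p) := by
  set f : End k V := (B.toDual hB).symm.toLinearMap ∘ₗ B.flip
  have hf : B ∘ₗ f = B.flip := by
    ext x y
    simp [f]
  have hnondeg (c : k) (hc : IsUnit (1 + c • f)) : (B + c • B.flip).Nondegenerate := by
    have hBc : B ∘ₗ (1 + c • f) = B + c • B.flip := by
      rw [comp_add, comp_smul, hf, End.one_eq_id, comp_id]
    exact hBc ▸ hB.comp_of_isUnit hc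
  have h2' : IsUnit (2 : End k V) := by
    simpa only [map_ofNat] using h2.isUnit.map (algebraMap k (End k V))
  have hfψ := apply_mem_of_comp_eq_flip hinv hB h hf
  rcases hψ.isUnit_or_isNilpotent (e := 1 - f) fun p x hx => sub_mem hx (hfψ p x hx)
    with hunit | hnil
  · have hnd := hnondeg (-1) (by rwa [neg_one_smul, ← sub_eq_add_neg])
    refine ⟨_, hnd, .inr fun x => ?_, orthogonal_add_smul_flip hinv hB h hnd⟩
    simp
  · have hnd := hnondeg 1 <| by
      rw [one_smul]
      exact isUnit_one_add_of_isNilpotent_one_sub h2' hnil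
    refine ⟨_, hnd, .inl ⟨fun x y => ?_⟩, orthogonal_add_smul_flip hinv hB h hnd⟩
    simp [add_comm]

end LinearMap.BilinForm

theorem selfdual_iff_compatible_form_general
    {k V P : Type*} [Field k] [AddCommGroup V] [Module k V] [FiniteDimensional k V]
    (h2 : (2 : k) ≠ 0)
    (invol : P → P) (hinv : Function.Involutive invol)
    (ψ : P → Submodule k V)
    (hindec : ∀ U' U'' : Submodule k V, IsCompl U' U'' →
      (∀ p, ψ p = (ψ p ⊓ U') ⊔ (ψ p ⊓ U'')) → U' = ⊥ ∨ U'' = ⊥) :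
    (∃ g : V ≃ₗ[k] Module.Dual k V,
        ∀ p, (ψ p).map (g : V →ₗ[k] Module.Dual k V) = (ψ (invol p)).dualAnnihilator)
    ↔ (∃ B : LinearMap.BilinForm k V, LinearMap.BilinForm.Nondegenerate B ∧
        (LinearMap.IsSymm B ∨ LinearMap.IsAlt B) ∧
        ∀ p, ∀ v : V, v ∈ ψ (invol p) ↔ ∀ w ∈ ψ p, B v w = 0) := by
  have isRefl {B : LinearMap.BilinForm k V} (h : LinearMap.IsSymm B ∨ LinearMap.IsAlt B) :
      B.IsRefl := h.elim LinearMap.IsSymm.isRefl LinearMap.IsAlt.isRefl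
  constructor
  · rintro ⟨g, hg⟩
    have hB : LinearMap.BilinForm.Nondegenerate (g : V →ₗ[k] Module.Dual k V) :=
      nondegenerate_iff_ker_eq_bot.mpr g.ker
    obtain ⟨B, hB, hsa, hBψ⟩ := exists_isSymm_or_isAlt_orthogonal_eq h2 hinv hindec hB
      fun p => (map_eq_dualAnnihilator_iff_orthogonal_eq _ _ _).mp (hg p)
    refine ⟨B, hB, hsa, fun p v => ?_⟩
    rw [← hBψ p, mem_orthogonal_iff_of_isRefl (isRefl hsa)]
  · rintro ⟨B, hB, hsa, hBψ⟩
    refine ⟨B.toDual hB, fun p => (map_eq_dualAnnihilator_iff_orthogonal_eq B _ _).mpr ?_⟩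
    ext v
    rw [mem_orthogonal_iff_of_isRefl (isRefl hsa), hBψ p v]

/-- Let `k` be a field of characteristic `≠ 2`, `(P, ⊥)` a poset with
an order-reversing involution, and `ψ` an indecomposable linear representation of `P`
in a finite-dimensional `k`-vector space `V`.  Then `ψ` is isomorphic to its dual
representation `ψ*` (given by `ψ*(p) = (ψ(p^⊥))°` in `V*`) if and only if there exists
a compatible form for `ψ`, i.e. a nondegenerate bilinear form `B` on `V`, symmetric or
alternating, such that for every `p` the `B`-orthogonal of `ψ(p)` equals `ψ(p^⊥)`. -/
theorem selfdual_iff_compatible_form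
    {k V P : Type*} [Field k] [AddCommGroup V] [Module k V] [FiniteDimensional k V]
    [PartialOrder P] (h2 : (2 : k) ≠ 0) [Nontrivial V]
    (invol : P → P) (hinv : Function.Involutive invol) (hanti : Antitone invol)
    (ψ : P → Submodule k V) (hmono : Monotone ψ)
    (hindec : ∀ U' U'' : Submodule k V, IsCompl U' U'' →
      (∀ p, ψ p = (ψ p ⊓ U') ⊔ (ψ p ⊓ U'')) → U' = ⊥ ∨ U'' = ⊥) :
    (∃ g : V ≃ₗ[k] Module.Dual k V,
        ∀ p, (ψ p).map (g : V →ₗ[k] Module.Dual k V) = (ψ (invol p)).dualAnnihilator)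
    ↔ (∃ B : LinearMap.BilinForm k V, LinearMap.BilinForm.Nondegenerate B ∧
        (LinearMap.IsSymm B ∨ LinearMap.IsAlt B) ∧
        ∀ p, ∀ v : V, v ∈ ψ (invol p) ↔ ∀ w ∈ ψ p, B v w = 0) :=
  selfdual_iff_compatible_form_general h2 invol hinv ψ hindec
end

section
/- Let k be a field of characteristic ≠ 2, (P, ⊥) a poset with an order-reversing involution, and φ a symplectic representation of (P, ⊥) in a finite-dimensional symplectic space (V, ω) over k. Define τ : V × V → V* × V by τ(v, w) = (½ ω̃(v + w), v − w), where ω̃(v) = ω(v, ·) ∈ V*. Then: (a) τ is a linear isomorphism; (b) Ω(τ(v, w), τ(v', w')) = ω(v, v') − ω(w, w') for all v, w, v', w' ∈ V, where Ω((ξ, x), (η, y)) = ξ(y) − η(x) is the canonical symplectic form on V* × V; (c) τ(φ(p) × φ(p)) = (φ(p^⊥))° × φ(p) for every p ∈ P, where ° denotes annihilator. Hence τ is an isomorphism of symplectic representations from φ ⊕ φ̄ on (V × V, ω ⊕ (−ω)) to the symplectification of the underlying linear representation of φ. -/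
/-- The canonical symplectic form `Ω((ξ, x), (η, y)) = ξ(y) − η(x)` on `V* × V`. -/
noncomputable def OmegaForm (k V : Type*) [Field k] [AddCommGroup V] [Module k V] :
    LinearMap.BilinForm k (Module.Dual k V × V) :=
  ((Module.dualPairing k V).compl₁₂
      (LinearMap.fst k (Module.Dual k V) V) (LinearMap.snd k (Module.Dual k V) V)) -
  ((Module.dualPairing k V).compl₁₂
      (LinearMap.fst k (Module.Dual k V) V) (LinearMap.snd k (Module.Dual k V) V)).flip

/-- The map `τ(v, w) = (½ ω̃(v + w), v − w) : V × V → V* × V`. -/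
noncomputable def tauMap {k V : Type*} [Field k] [AddCommGroup V] [Module k V]
    (ω : LinearMap.BilinForm k V) : V × V →ₗ[k] Module.Dual k V × V :=
  LinearMap.prod
    ((2 : k)⁻¹ • (ω ∘ₗ (LinearMap.fst k V V + LinearMap.snd k V V)))
    (LinearMap.fst k V V - LinearMap.snd k V V)

/-! The kernel of `τ` forces `v = w` and `ω̃ (v + w) = 0`, so `τ` is injective when `2 ≠ 0`,
and `V × V` and `V* × V` have the same dimension. The form identity is a direct expansion using
skew-symmetry. For (c), `τ (W × W) = ω̃ W × W` because `(v, w) ↦ (-½ (v + w), v - w)` is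
invertible on `W × W`, and `ω̃ W = (W^⊥)°`: the inclusion is immediate, and both sides have
dimension `dim W` since `ω̃` is injective. -/

open Module

section

variable {k V : Type*} [Field k] [AddCommGroup V] [Module k V] {ω : LinearMap.BilinForm k V}

theorem tauMap_apply (v w : V) : tauMap ω (v, w) = ((2 : k)⁻¹ • ω (v + w), v - w) := rfl

theorem LinearMap.IsAlt.flip_apply_eq_neg (halt : LinearMap.IsAlt ω) (v : V) :
    ω.flip v = -ω v := by
  ext u
  exact (halt.neg v u).symm

theorem map_flip_eq_dualAnnihilator_orthogonal [FiniteDimensional k V]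
    (hnd : ω.Nondegenerate) (W : Submodule k V) :
    W.map ω.flip = (ω.flip.orthogonal W).dualAnnihilator := by
  refine Submodule.eq_of_le_of_finrank_eq ?_ ?_
  · rintro _ ⟨v, hv, rfl⟩
    rw [Submodule.mem_dualAnnihilator]
    exact fun u hu => hu v hv
  · have hinj : Function.Injective ω.flip := LinearMap.ker_eq_bot.mp hnd.flip.ker_eq_bot
    have hann := Subspace.finrank_add_finrank_dualAnnihilator_eq (ω.flip.orthogonal W)
    rw [LinearMap.BilinForm.finrank_orthogonal hnd.flip] at hann
    rw [← (Submodule.equivMapOfInjective _ hinj W).finrank_eq]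
    have hW := Submodule.finrank_le W
    zify [hW] at hann ⊢
    linarith

theorem tauMap_injective (h2 : (2 : k) ≠ 0) (hnd : ω.Nondegenerate) :
    Function.Injective (tauMap ω) := by
  rw [← LinearMap.ker_eq_bot, Submodule.eq_bot_iff]
  rintro ⟨v, w⟩ hvw
  rw [LinearMap.mem_ker, tauMap_apply, Prod.mk_eq_zero, smul_eq_zero, sub_eq_zero] at hvw
  obtain ⟨hsum | hsum, rfl⟩ := hvw
  · exact absurd hsum (inv_ne_zero h2)
  have hv : (2 : k) • v = 0 := by
    rw [two_smul]
    exact hnd.1 _ (LinearMap.ext_iff.mp hsum)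
  simpa [h2] using hv

theorem tauMap_bijective [FiniteDimensional k V] (h2 : (2 : k) ≠ 0) (hnd : ω.Nondegenerate) :
    Function.Bijective (tauMap ω) := by
  have hinj := tauMap_injective h2 hnd
  have hdim : finrank k (V × V) = finrank k (Dual k V × V) := by
    rw [finrank_prod, finrank_prod, Subspace.dual_finrank_eq]
  exact ⟨hinj, (LinearMap.injective_iff_surjective_of_finrank_eq_finrank hdim).mp hinj⟩

theorem omegaForm_apply (ξ η : Dual k V) (x y : V) :
    OmegaForm k V (ξ, x) (η, y) = ξ y - η x := rfl

theorem omegaForm_tauMap (h2 : (2 : k) ≠ 0) (halt : LinearMap.IsAlt ω) (v w v' w' : V) :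
    OmegaForm k V (tauMap ω (v, w)) (tauMap ω (v', w')) = ω v v' - ω w w' := by
  have hskew (a b : V) : ω b a = -ω a b := (halt.neg a b).symm
  simp only [tauMap_apply, omegaForm_apply, LinearMap.smul_apply, map_add, map_sub,
    LinearMap.add_apply, smul_eq_mul]
  rw [hskew v v', hskew v w', hskew w v', hskew w w']
  field_simp
  ring

theorem map_prod_tauMap (h2 : (2 : k) ≠ 0) (halt : LinearMap.IsAlt ω) (W : Submodule k V) :
    (W.prod W).map (tauMap ω) = (W.map ω.flip).prod W := by
  ext ⟨ξ, x⟩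
  simp only [Submodule.mem_map, Submodule.mem_prod, Prod.exists, tauMap_apply, Prod.mk.injEq]
  constructor
  · rintro ⟨v, w, ⟨hv, hw⟩, rfl, rfl⟩
    refine ⟨⟨-(2 : k)⁻¹ • (v + w), W.smul_mem _ (W.add_mem hv hw), ?_⟩, W.sub_mem hv hw⟩
    rw [map_smul, halt.flip_apply_eq_neg, smul_neg, neg_smul, neg_neg]
  · rintro ⟨⟨u, hu, rfl⟩, hx⟩
    set y := (2 : k)⁻¹ • x
    refine ⟨-u + y, -u - y, ⟨W.add_mem (W.neg_mem hu) (W.smul_mem _ hx),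
      W.sub_mem (W.neg_mem hu) (W.smul_mem _ hx)⟩, ?_, ?_⟩
    · rw [show -u + y + (-u - y) = (2 : k) • -u by module, map_smul, inv_smul_smul₀ h2,
        map_neg, halt.flip_apply_eq_neg]
    · calc -u + y - (-u - y) = (2 : k) • y := by module
        _ = x := smul_inv_smul₀ h2 x

end

theorem tau_isomorphism_onto_symplectification_general
    {k V P : Type*} [Field k] [AddCommGroup V] [Module k V] [FiniteDimensional k V]
    (h2 : (2 : k) ≠ 0)
    (invol : P → P)
    (ω : LinearMap.BilinForm k V) (halt : LinearMap.IsAlt ω)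
    (hnd : LinearMap.BilinForm.Nondegenerate ω)
    (φ : P → Submodule k V)
    (hsymp : ∀ p, φ (invol p) = LinearMap.BilinForm.orthogonal ω.flip (φ p)) :
    Function.Bijective (tauMap ω)
    ∧ (∀ v w v' w' : V,
        OmegaForm k V (tauMap ω (v, w)) (tauMap ω (v', w')) = ω v v' - ω w w')
    ∧ (∀ p, ((φ p).prod (φ p)).map (tauMap ω) =
        ((φ (invol p)).dualAnnihilator).prod (φ p)) := by
  refine ⟨tauMap_bijective h2 hnd, omegaForm_tauMap h2 halt, fun p => ?_⟩
  rw [map_prod_tauMap h2 halt, map_flip_eq_dualAnnihilator_orthogonal hnd, hsymp]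

/-- For a symplectic representation `φ` of a poset with
order-reversing involution `(P, ⊥)` in `(V, ω)` over a field of characteristic `≠ 2`:
(a) `τ` is a linear isomorphism; (b) `Ω(τ(v, w), τ(v', w')) = ω(v, v') − ω(w, w')`;
(c) `τ(φ(p) × φ(p)) = (φ(p^⊥))° × φ(p)` for every `p`.  Hence `τ` is an isomorphism of
symplectic representations from `φ ⊕ φ̄` onto the symplectification of the underlying
linear representation of `φ`. -/
theorem tau_isomorphism_onto_symplectification
    {k V P : Type*} [Field k] [AddCommGroup V] [Module k V] [FiniteDimensional k V]
    [PartialOrder P] (h2 : (2 : k) ≠ 0)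
    (invol : P → P) (hinv : Function.Involutive invol) (hanti : Antitone invol)
    (ω : LinearMap.BilinForm k V) (halt : LinearMap.IsAlt ω)
    (hnd : LinearMap.BilinForm.Nondegenerate ω)
    (φ : P → Submodule k V) (hmono : Monotone φ)
    (hsymp : ∀ p, φ (invol p) = LinearMap.BilinForm.orthogonal ω.flip (φ p)) :
    Function.Bijective (tauMap ω)
    ∧ (∀ v w v' w' : V,
        OmegaForm k V (tauMap ω (v, w)) (tauMap ω (v', w')) = ω v v' - ω w w')
    ∧ (∀ p, ((φ p).prod (φ p)).map (tauMap ω) =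
        ((φ (invol p)).dualAnnihilator).prod (φ p)) :=
  tau_isomorphism_onto_symplectification_general h2 invol ω halt hnd φ hsymp
end

section
/- Let k be a field of characteristic ≠ 2, (P, ⊥) a poset with an order-reversing involution, and ψ an indecomposable linear representation of P in a finite-dimensional k-vector space V. Then the symplectification ψ⁻ is symplectically decomposable — i.e. there exist nonzero subspaces W, W' of V* × V with W' equal to the Ω-orthogonal of W, V* × V = W ⊕ W', and ψ⁻(p) = (ψ⁻(p) ∩ W) ⊕ (ψ⁻(p) ∩ W') for all p ∈ P — if and only if ψ admits a compatible symplectic form, i.e. a nondegenerate alternating bilinear form B on V such that for every p the B-orthogonal of ψ(p) equals ψ(p^⊥). -/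
open Module LinearMap

section Projection

variable {R M : Type*} [CommRing R] [AddCommGroup M] [Module R M]

lemma LinearMap.BilinForm.isSelfAdjoint_projection {B : LinearMap.BilinForm R M}
    (hB : LinearMap.IsRefl B) {W W' : Submodule R M} (hWW' : IsCompl W W')
    (horth : W' = B.flip.orthogonal W) :
    B.IsSelfAdjoint (W.projection W' hWW') := by
  set e := W.projection W' hWW'
  have hperp : ∀ x y, B (x - e x) (e y) = 0 := by
    intro x y
    have hx : x - e x ∈ B.flip.orthogonal W := by
      rw [← horth, ← Submodule.projection_eq_self_sub_projection hWW']
      exact Submodule.projection_apply_mem _ x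
    exact BilinForm.mem_orthogonal_iff.mp hx (e y) (Submodule.projection_apply_mem _ y)
  intro x y
  calc B (e x) y = B (e x) (e y) := by
        rw [← sub_eq_zero, ← map_sub]
        exact hB _ _ (hperp y x)
    _ = B x (e y) := by
        rw [eq_comm, ← sub_eq_zero, ← LinearMap.sub_apply, ← map_sub]
        exact hperp x y

lemma Submodule.projection_mem_of_eq_inf_sup {W W' S : Submodule R M} (hWW' : IsCompl W W')
    (hS : S = S ⊓ W ⊔ S ⊓ W') {z : M} (hz : z ∈ S) : W.projection W' hWW' z ∈ S := by
  rw [hS] at hz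
  obtain ⟨x, hx, y, hy, rfl⟩ := Submodule.mem_sup.mp hz
  rw [map_add, projection_apply_of_mem_left hWW' hx.2, projection_apply_of_mem_right hWW' hy.2,
    add_zero]
  exact hx.1

end Projection

section Fitting

variable {k V : Type*} [Field k] [AddCommGroup V] [Module k V] [FiniteDimensional k V]

lemma Submodule.eq_inf_ker_sup_inf_range {f : End k V} (hf : Disjoint (ker f) (range f))
    {S : Submodule k V} (hS : ∀ x ∈ S, f x ∈ S) : S = S ⊓ ker f ⊔ S ⊓ range f := by
  refine le_antisymm (fun x hx => ?_) (sup_le inf_le_left inf_le_left)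
  have hT : ∀ y ∈ S ⊓ range f, f y ∈ S ⊓ range f := fun y hy =>
    ⟨hS y hy.1, mem_range_self f y⟩
  have hinj : Set.InjOn f (S ⊓ range f) := fun y hy z hz hyz =>
    sub_eq_zero.mp <| disjoint_iff_inf_le.mp hf
      ⟨mem_ker.mpr (by rw [map_sub, hyz, sub_self]), sub_mem hy.2 hz.2⟩
  obtain ⟨w, hw, hfw⟩ := (injOn_iff_surjOn hT).mp hinj ⟨hS x hx, mem_range_self f x⟩
  rw [← sub_add_cancel x w]
  exact add_mem_sup ⟨sub_mem hx hw.1, by simp [hfw]⟩ hw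

lemma Module.End.bijective_or_isNilpotent_of_indecomposable {P : Type*}
    (ψ : P → Submodule k V)
    (hindec : ∀ U' U'' : Submodule k V, IsCompl U' U'' →
      (∀ p, ψ p = (ψ p ⊓ U') ⊔ (ψ p ⊓ U'')) → U' = ⊥ ∨ U'' = ⊥)
    {a : End k V} (ha : ∀ p, ∀ x ∈ ψ p, a x ∈ ψ p) :
    Function.Bijective a ∨ IsNilpotent a := by
  obtain ⟨m, hm, hm1⟩ :=
    (a.eventually_isCompl_ker_pow_range_pow.and (Filter.eventually_ge_atTop 1)).exists
  have hpow : ∀ p, ∀ x ∈ ψ p, (a ^ m) x ∈ ψ p := fun p x hx => by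
    rw [pow_apply]; exact Set.MapsTo.iterate (ha p) m hx
  rcases hindec _ _ hm fun p => Submodule.eq_inf_ker_sup_inf_range hm.disjoint (hpow p)
    with h | h
  · have hinj : Function.Injective a := by
      rw [← ker_eq_bot, eq_bot_iff, ← h]
      intro x hx
      rw [mem_ker, ← Nat.sub_add_cancel hm1, pow_succ, mul_apply, mem_ker.mp hx, map_zero]
    exact Or.inl ⟨hinj, injective_iff_surjective.mp hinj⟩
  · exact Or.inr ⟨m, range_eq_bot.mp h⟩

end Fitting

namespace OmegaForm

variable {k V : Type*} [Field k] [AddCommGroup V] [Module k V]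

lemma apply (z w : Dual k V × V) : OmegaForm k V z w = z.1 w.2 - w.1 z.2 := rfl

lemma isAlt : LinearMap.IsAlt (OmegaForm k V) := fun _ => sub_self _

def endPart (e : End k (Dual k V × V)) : End k V :=
  snd k (Dual k V) V ∘ₗ e ∘ₗ inr k (Dual k V) V

def formPart (e : End k (Dual k V × V)) : LinearMap.BilinForm k V :=
  fst k (Dual k V) V ∘ₗ e ∘ₗ inr k (Dual k V) V

lemma apply_zero_mk (e : End k (Dual k V × V)) (v : V) :
    e (0, v) = (formPart e v, endPart e v) := rfl

lemma endPart_one_sub (e : End k (Dual k V × V)) : endPart (1 - e) = 1 - endPart e := rfl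

section SelfAdjoint

variable {e : End k (Dual k V × V)} (hsa : (OmegaForm k V).IsSelfAdjoint e)
include hsa

lemma formPart_swap (x y : V) : formPart e x y = -formPart e y x := by
  simpa [OmegaForm.apply, apply_zero_mk] using hsa (0, x) (0, y)

lemma isAlt_formPart (h2 : (2 : k) ≠ 0) : LinearMap.IsAlt (formPart e) := fun x =>
  (mul_eq_zero.mp (by linear_combination formPart_swap hsa x x : (2 : k) * formPart e x x = 0))
    |>.resolve_left h2

lemma eq_zero_of_apply_eq_self (ha' : Function.Surjective (1 - endPart e : End k V))
    {z : Dual k V × V} (hz : e z = z) (hz2 : z.2 = 0) : z = 0 := by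
  have hz1 : ∀ y, z.1 ((1 - endPart e) y) = 0 := fun y => by
    simpa [OmegaForm.apply, apply_zero_mk, hz, hz2, sub_eq_zero] using hsa z (0, y)
  exact Prod.ext (LinearMap.ext fun u => by obtain ⟨y, rfl⟩ := ha' u; exact hz1 y) hz2

variable (he : IsIdempotentElem e)
include he

lemma apply_apply_self (z w : Dual k V × V) :
    OmegaForm k V (e z) (e w) = OmegaForm k V (e z) w := by
  rw [hsa, ← Module.End.mul_apply, he.eq, hsa]

lemma formPart_one_sub_endPart (x y : V) :
    formPart e ((1 - endPart e) x) y = formPart e x (endPart e y) := by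
  have h := apply_apply_self hsa he (0, x) (0, y)
  simp only [OmegaForm.apply, apply_zero_mk, LinearMap.zero_apply, sub_zero] at h
  simp only [LinearMap.sub_apply, Module.End.one_apply, map_sub]
  linear_combination -h - formPart_swap hsa y (endPart e x)


lemma formPart_eq_zero (ha : Function.Surjective (endPart e))
    (hN : IsNilpotent (1 - endPart e)) : formPart e = 0 := by
  obtain ⟨m, hm⟩ := hN
  have hpow : ∀ n x y,
      formPart e (((1 - endPart e) ^ n) x) y = formPart e x ((endPart e ^ n) y) := by
    intro n
    induction n with
    | zero => simp
    | succ n ih =>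
      intro x y
      rw [pow_succ, Module.End.mul_apply, ih, formPart_one_sub_endPart hsa he, pow_succ',
        Module.End.mul_apply]
  ext x y
  obtain ⟨y, rfl⟩ := (Module.End.coe_pow (endPart e) m ▸ ha.iterate m) y
  simp [← hpow, hm]

lemma eq_one_of_isNilpotent_one_sub_endPart (ha : Function.Bijective (endPart e))
    (hN : IsNilpotent (1 - endPart e)) : e = 1 := by
  have hc := formPart_eq_zero hsa he ha.2 hN
  have hfix : ∀ v, e (0, v) = (0, v) := by
    intro v
    have haa : endPart e (endPart e v) = endPart e v := by
      simpa [apply_zero_mk, hc] using congrArg Prod.snd congr($(he.eq) (0, v))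
    rw [apply_zero_mk, hc, ha.1 haa]
    rfl
  refine LinearMap.ext fun z => ?_
  set d := e z - z
  have hed : e d = 0 := by rw [map_sub, ← Module.End.mul_apply, he.eq, sub_self]
  have hd1 : d.1 = 0 := LinearMap.ext fun y => by
    simpa [OmegaForm.apply, hed, hfix] using (hsa d (0, y)).symm
  have hd : d = 0 := by rw [← hed, show d = (0, d.2) from Prod.ext hd1 rfl, hfix]
  exact sub_eq_zero.mp hd

lemma apply_eq_of_snd_eq (ha' : Function.Surjective (1 - endPart e : End k V)) {z w : Dual k V × V}
    (h : (e z).2 = (e w).2) : e z = e w :=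
  sub_eq_zero.mp <| eq_zero_of_apply_eq_self hsa ha'
    (by rw [map_sub, ← Module.End.mul_apply, ← Module.End.mul_apply, he.eq])
    (by rw [Prod.snd_sub, h, sub_self])

lemma nondegenerate_formPart (ha : Function.Injective (endPart e))
    (ha' : Function.Injective (1 - endPart e : End k V)) : (formPart e).Nondegenerate := by
  have hsep : SeparatingLeft (formPart e) := by
    intro v hv
    have hc : formPart e v = 0 := LinearMap.ext hv
    have haa : endPart e (endPart e v) = endPart e v := by
      simpa [apply_zero_mk, hc] using congrArg Prod.snd congr($(he.eq) (0, v))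
    have hav : endPart e v = 0 := ha' (by simp [haa])
    exact ha (by rw [hav, map_zero])
  exact ⟨hsep, fun y hy => hsep y fun x => by rw [formPart_swap hsa, hy, neg_zero]⟩

lemma mem_iff_forall_formPart_eq_zero [FiniteDimensional k V] {U X : Submodule k V}
    (hS : ∀ z ∈ U.dualAnnihilator.prod X, e z ∈ U.dualAnnihilator.prod X)
    (hU : ∀ u ∈ U, endPart e u ∈ U) (ha : Function.Bijective (endPart e))
    (ha' : Function.Surjective (1 - endPart e : End k V)) (v : V) :
    v ∈ U ↔ ∀ w ∈ X, formPart e v w = 0 := by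
  have hX : ∀ x ∈ X, formPart e x ∈ U.dualAnnihilator ∧ endPart e x ∈ X := fun x hx =>
    hS (0, x) ⟨zero_mem _, hx⟩
  refine ⟨fun hv w hw => ?_, fun hv => ?_⟩
  · rw [formPart_swap hsa, neg_eq_zero]
    exact (Submodule.mem_dualAnnihilator _).mp (hX w hw).1 v hv
  suffices h : endPart e v ∈ U by
    obtain ⟨u, hu, hau⟩ := (injOn_iff_surjOn hU).mp ha.1.injOn h
    exact ha.1 hau ▸ hu
  rw [← Subspace.forall_mem_dualAnnihilator_apply_eq_zero_iff]
  intro ξ hξ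
  have hξ0 := hS (ξ, 0) ⟨hξ, zero_mem _⟩
  obtain ⟨x, hx, hax⟩ := (injOn_iff_surjOn fun x hx => (hX x hx).2).mp ha.1.injOn hξ0.2
  have heq : e (ξ, 0) = e (0, x) := apply_eq_of_snd_eq hsa he ha' hax.symm
  calc ξ (endPart e v) = OmegaForm k V (ξ, 0) (e (0, v)) := by
        simp [OmegaForm.apply, apply_zero_mk]
    _ = OmegaForm k V (e (ξ, 0)) (0, v) := (hsa _ _).symm
    _ = formPart e x v := by simp [heq, OmegaForm.apply, apply_zero_mk]
    _ = 0 := by rw [formPart_swap hsa, hv x hx, neg_zero]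

end SelfAdjoint

def dualGraph (B : LinearMap.BilinForm k V) : Submodule k (Dual k V × V) :=
  range (LinearMap.prod B LinearMap.id)

lemma mem_dualGraph {B : LinearMap.BilinForm k V} {z : Dual k V × V} :
    z ∈ dualGraph B ↔ z.1 = B z.2 :=
  ⟨by rintro ⟨v, rfl⟩; rfl, fun h => ⟨z.2, Prod.ext h.symm rfl⟩⟩

lemma dualGraph_ne_bot [Nontrivial V] (B : LinearMap.BilinForm k V) : dualGraph B ≠ ⊥ := by
  obtain ⟨v, hv⟩ := exists_ne (0 : V)
  intro h
  have hmem : ((B v, v) : Dual k V × V) ∈ dualGraph B := mem_dualGraph.mpr rfl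
  rw [h, Submodule.mem_bot] at hmem
  exact hv (congrArg Prod.snd hmem)

lemma dualGraph_neg_eq_orthogonal {B : LinearMap.BilinForm k V} (hB : LinearMap.IsAlt B) :
    dualGraph (-B) = LinearMap.BilinForm.orthogonal (OmegaForm k V).flip (dualGraph B) := by
  ext z
  rw [LinearMap.BilinForm.mem_orthogonal_iff, mem_dualGraph]
  constructor
  · intro hz n hn
    change OmegaForm k V z n = 0
    rw [OmegaForm.apply, hz, mem_dualGraph.mp hn, LinearMap.neg_apply, LinearMap.neg_apply]
    linear_combination hB.neg z.2 n.2
  · intro hz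
    ext v
    have h := hz (B v, v) (mem_dualGraph.mpr rfl)
    change z.1 v - B v z.2 = 0 at h
    rw [LinearMap.neg_apply, LinearMap.neg_apply]
    linear_combination h - hB.neg z.2 v

lemma mk_eq_add_of_two_ne_zero (h2 : (2 : k) ≠ 0) (B : LinearMap.BilinForm k V) (t x : V) :
    ((B t, x) : Dual k V × V) =
      (B ((2 : k)⁻¹ • (x + t)), (2 : k)⁻¹ • (x + t)) +
        ((-B) ((2 : k)⁻¹ • (x - t)), (2 : k)⁻¹ • (x - t)) := by
  refine Prod.ext ?_ ?_
  · rw [Prod.fst_add, LinearMap.neg_apply, ← sub_eq_add_neg, ← map_sub, ← smul_sub,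
      add_sub_sub_cancel, ← two_smul k t, smul_smul, inv_mul_cancel₀ h2, one_smul]
  · rw [Prod.snd_add, ← smul_add, add_add_sub_cancel, ← two_smul k x, smul_smul,
      inv_mul_cancel₀ h2, one_smul]

lemma isCompl_dualGraph [FiniteDimensional k V] (h2 : (2 : k) ≠ 0)
    {B : LinearMap.BilinForm k V} (hB : B.Nondegenerate) :
    IsCompl (dualGraph B) (dualGraph (-B)) := by
  constructor
  · rw [Submodule.disjoint_def]
    intro z hz hz'
    have hneg : B z.2 = -B z.2 := (mem_dualGraph.mp hz).symm.trans (mem_dualGraph.mp hz')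
    have h2B : (2 : k) • B z.2 = 0 := by
      rw [two_smul]
      nth_rewrite 1 [hneg]
      exact neg_add_cancel _
    have hBz : B z.2 = 0 := (smul_eq_zero.mp h2B).resolve_left h2
    have hz2 : z.2 = 0 := hB.1 _ fun y => by rw [hBz, LinearMap.zero_apply]
    exact Prod.ext (by rw [mem_dualGraph.mp hz, hBz]; rfl) hz2
  · rw [codisjoint_iff, eq_top_iff]
    rintro z -
    obtain ⟨t, ht⟩ : ∃ t, B t = z.1 := (B.toDual hB).surjective z.1
    rw [← Prod.mk.eta (p := z), ← ht, mk_eq_add_of_two_ne_zero h2]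
    exact Submodule.add_mem_sup (mem_dualGraph.mpr rfl) (mem_dualGraph.mpr rfl)

lemma eq_inf_dualGraph_sup [FiniteDimensional k V] (h2 : (2 : k) ≠ 0)
    {B : LinearMap.BilinForm k V} (hB : LinearMap.IsAlt B) {U X : Submodule k V}
    (hUX : ∀ v, v ∈ U ↔ ∀ w ∈ X, B v w = 0) :
    U.dualAnnihilator.prod X =
      U.dualAnnihilator.prod X ⊓ dualGraph B ⊔ U.dualAnnihilator.prod X ⊓ dualGraph (-B) := by
  have hU : U = (X.map B).dualCoannihilator := by
    ext v
    simp [hUX, Submodule.mem_dualCoannihilator, hB.eq_iff]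
  have hmap : U.dualAnnihilator = X.map B := by
    rw [hU, Subspace.dualCoannihilator_dualAnnihilator_eq]
  refine le_antisymm (fun z hz => ?_) (sup_le inf_le_left inf_le_left)
  obtain ⟨t, ht, hzt⟩ := hmap ▸ hz.1
  have hu : (2 : k)⁻¹ • (z.2 + t) ∈ X := X.smul_mem _ (X.add_mem hz.2 ht)
  have hw : (2 : k)⁻¹ • (z.2 - t) ∈ X := X.smul_mem _ (X.sub_mem hz.2 ht)
  rw [← Prod.mk.eta (p := z), ← hzt, mk_eq_add_of_two_ne_zero h2]
  exact Submodule.add_mem_sup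
    ⟨⟨hmap ▸ Submodule.mem_map_of_mem hu, hu⟩, mem_dualGraph.mpr rfl⟩
    ⟨⟨hmap ▸ neg_mem (Submodule.mem_map_of_mem hw), hw⟩, mem_dualGraph.mpr rfl⟩

lemma exists_compatible_form_of_projection [FiniteDimensional k V] {P : Type*} (h2 : (2 : k) ≠ 0)
    (invol : P → P) (ψ : P → Submodule k V)
    (hindec : ∀ U' U'' : Submodule k V, IsCompl U' U'' →
      (∀ p, ψ p = (ψ p ⊓ U') ⊔ (ψ p ⊓ U'')) → U' = ⊥ ∨ U'' = ⊥)
    {e : End k (Dual k V × V)} (hsa : (OmegaForm k V).IsSelfAdjoint e) (he : IsIdempotentElem e)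
    (hS : ∀ p, ∀ z ∈ (ψ (invol p)).dualAnnihilator.prod (ψ p),
      e z ∈ (ψ (invol p)).dualAnnihilator.prod (ψ p))
    (he0 : e ≠ 0) (he1 : e ≠ 1) :
    ∃ B : LinearMap.BilinForm k V, B.Nondegenerate ∧ LinearMap.IsAlt B ∧
      ∀ p, ∀ v : V, v ∈ ψ (invol p) ↔ ∀ w ∈ ψ p, B v w = 0 := by
  have hψ : ∀ p, ∀ x ∈ ψ p, endPart e x ∈ ψ p := fun p x hx =>
    (hS p (0, x) ⟨zero_mem _, hx⟩).2
  rcases Module.End.bijective_or_isNilpotent_of_indecomposable ψ hindec hψ with ha | ha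
  · rcases Module.End.bijective_or_isNilpotent_of_indecomposable ψ hindec
      (a := 1 - endPart e) fun p x hx => sub_mem hx (hψ p x hx) with ha' | ha'
    · exact ⟨formPart e, nondegenerate_formPart hsa he ha.1 ha'.1, isAlt_formPart hsa h2,
        fun p => mem_iff_forall_formPart_eq_zero hsa he (hS p) (hψ _) ha ha'.2⟩
    · exact absurd (eq_one_of_isNilpotent_one_sub_endPart hsa he ha ha') he1
  · have he' := IsIdempotentElem.one_sub (R := End k (Dual k V × V)) he
    have hsa' : (OmegaForm k V).IsSelfAdjoint ⇑(1 - e) := isAdjointPair_one.sub hsa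
    have ha' : Function.Bijective (endPart (1 - e)) := by
      rw [endPart_one_sub]
      exact (Module.End.isUnit_iff _).mp ha.isUnit_one_sub
    have hN : IsNilpotent (1 - endPart (1 - e)) := by rwa [endPart_one_sub, sub_sub_cancel]
    have h1 : 1 - e = 1 := eq_one_of_isNilpotent_one_sub_endPart hsa' he' ha' hN
    exact absurd ((sub_eq_self (G := End k (Dual k V × V))).mp h1) he0

end OmegaForm

theorem symplectification_decomposable_iff_compatible_symplectic_form_general
    {k V P : Type*} [Field k] [AddCommGroup V] [Module k V] [FiniteDimensional k V]
    (h2 : (2 : k) ≠ 0) [Nontrivial V]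
    (invol : P → P)
    (ψ : P → Submodule k V)
    (hindec : ∀ U' U'' : Submodule k V, IsCompl U' U'' →
      (∀ p, ψ p = (ψ p ⊓ U') ⊔ (ψ p ⊓ U'')) → U' = ⊥ ∨ U'' = ⊥) :
    (∃ W W' : Submodule k (Module.Dual k V × V), W ≠ ⊥ ∧ W' ≠ ⊥ ∧
        W' = LinearMap.BilinForm.orthogonal (OmegaForm k V).flip W ∧ IsCompl W W' ∧
        ∀ p, ((ψ (invol p)).dualAnnihilator.prod (ψ p)) =
          (((ψ (invol p)).dualAnnihilator.prod (ψ p)) ⊓ W) ⊔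
          (((ψ (invol p)).dualAnnihilator.prod (ψ p)) ⊓ W'))
    ↔ (∃ B : LinearMap.BilinForm k V, LinearMap.BilinForm.Nondegenerate B ∧
        LinearMap.IsAlt B ∧
        ∀ p, ∀ v : V, v ∈ ψ (invol p) ↔ ∀ w ∈ ψ p, B v w = 0) := by
  constructor
  · rintro ⟨W, W', hW, hW', horth, hWW', hdec⟩
    refine OmegaForm.exists_compatible_form_of_projection h2 invol ψ hindec
      (LinearMap.BilinForm.isSelfAdjoint_projection OmegaForm.isAlt.isRefl hWW' horth)
      (Submodule.isIdempotentElem_projection hWW')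
      (fun p z hz => Submodule.projection_mem_of_eq_inf_sup hWW' (hdec p) hz) ?_ ?_
    · intro h
      exact hW (by rw [← Submodule.range_projection hWW', h, LinearMap.range_zero])
    · intro h
      exact hW' (by rw [← Submodule.ker_projection hWW', h, Module.End.one_eq_id, ker_id])
  · rintro ⟨B, hB, hBalt, hcompat⟩
    exact ⟨OmegaForm.dualGraph B, OmegaForm.dualGraph (-B), OmegaForm.dualGraph_ne_bot B,
      OmegaForm.dualGraph_ne_bot (-B), OmegaForm.dualGraph_neg_eq_orthogonal hBalt,
      OmegaForm.isCompl_dualGraph h2 hB,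
      fun p => OmegaForm.eq_inf_dualGraph_sup h2 hBalt (hcompat p)⟩

/-- Let `ψ` be an indecomposable linear representation of a poset with
order-reversing involution `(P, ⊥)` in a finite-dimensional space `V` over a field of
characteristic `≠ 2`.  The symplectification `ψ⁻ : p ↦ (ψ(p^⊥))° × ψ(p)` in
`(V* × V, Ω)` is symplectically decomposable if and only if `ψ` admits a compatible
symplectic form. -/
theorem symplectification_decomposable_iff_compatible_symplectic_form
    {k V P : Type*} [Field k] [AddCommGroup V] [Module k V] [FiniteDimensional k V]
    [PartialOrder P] (h2 : (2 : k) ≠ 0) [Nontrivial V]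
    (invol : P → P) (hinv : Function.Involutive invol) (hanti : Antitone invol)
    (ψ : P → Submodule k V) (hmono : Monotone ψ)
    (hindec : ∀ U' U'' : Submodule k V, IsCompl U' U'' →
      (∀ p, ψ p = (ψ p ⊓ U') ⊔ (ψ p ⊓ U'')) → U' = ⊥ ∨ U'' = ⊥) :
    (∃ W W' : Submodule k (Module.Dual k V × V), W ≠ ⊥ ∧ W' ≠ ⊥ ∧
        W' = LinearMap.BilinForm.orthogonal (OmegaForm k V).flip W ∧ IsCompl W W' ∧
        ∀ p, ((ψ (invol p)).dualAnnihilator.prod (ψ p)) =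
          (((ψ (invol p)).dualAnnihilator.prod (ψ p)) ⊓ W) ⊔
          (((ψ (invol p)).dualAnnihilator.prod (ψ p)) ⊓ W'))
    ↔ (∃ B : LinearMap.BilinForm k V, LinearMap.BilinForm.Nondegenerate B ∧
        LinearMap.IsAlt B ∧
        ∀ p, ∀ v : V, v ∈ ψ (invol p) ↔ ∀ w ∈ ψ p, B v w = 0) :=
  symplectification_decomposable_iff_compatible_symplectic_form_general h2 invol ψ hindec
end

section
/- Let k be a field of characteristic ≠ 2, (P, ⊥) a poset with an order-reversing involution, and let ψ₁, ψ₂ be indecomposable linear representations of P in finite-dimensional k-vector spaces V₁, V₂. Then ψ₁ is isomorphic to ψ₂ or to the dual ψ₂* if and only if the symplectifications ψ₁⁻ and ψ₂⁻ are isomorphic as symplectic representations, i.e. there is a linear isomorphism F : V₁* × V₁ → V₂* × V₂ with Ω₂(F a, F b) = Ω₁(a, b) for all a, b and F(ψ₁⁻(p)) = ψ₂⁻(p) for all p ∈ P. -/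
open Module Set

theorem omegaForm_apply_s7 {k V : Type*} [Field k] [AddCommGroup V] [Module k V]
    (a b : Dual k V × V) : OmegaForm k V a b = a.1 b.2 - b.1 a.2 := rfl

namespace PosetRep

variable {k P V W : Type*} [Field k] [AddCommGroup V] [Module k V] [AddCommGroup W] [Module k W]

/-- Unlike the usual notion, this allows `V = 0`. -/
def IsIndecomposable (ψ : P → Submodule k V) : Prop :=
  ∀ U' U'' : Submodule k V, IsCompl U' U'' →
    (∀ p, ψ p = (ψ p ⊓ U') ⊔ (ψ p ⊓ U'')) → U' = ⊥ ∨ U'' = ⊥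

def dual (invol : P → P) (ψ : P → Submodule k V) : P → Submodule k (Dual k V) :=
  fun p => (ψ (invol p)).dualAnnihilator

def symplectification (invol : P → P) (ψ : P → Submodule k V) :
    P → Submodule k (Dual k V × V) :=
  fun p => (dual invol ψ p).prod (ψ p)

section FiniteDimensional

variable [FiniteDimensional k V] {ψ : P → Submodule k V}

theorem isNilpotent_or_isUnit (hψ : IsIndecomposable ψ) {u : End k V}
    (hu : ∀ p, MapsTo u (ψ p) (ψ p)) : IsNilpotent u ∨ IsUnit u := by
  obtain ⟨n, hfit, hn⟩ :=
    (u.eventually_isCompl_ker_pow_range_pow.and (Filter.eventually_ge_atTop 1)).exists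
  set w := u ^ n
  have hw : ∀ p, MapsTo w (ψ p) (ψ p) := fun p => by
    rw [End.coe_pow]; exact (hu p).iterate n
  -- Fitting: `w` is injective on `range w`, hence onto `ψ p ⊓ range w`; this splits `ψ p`.
  have hsplit : ∀ p, ψ p = (ψ p ⊓ LinearMap.ker w) ⊔ (ψ p ⊓ LinearMap.range w) := by
    intro p
    refine le_antisymm (fun x hx => ?_) (sup_le inf_le_left inf_le_left)
    have hS : ∀ y ∈ ψ p ⊓ LinearMap.range w, w y ∈ ψ p ⊓ LinearMap.range w :=
      fun y hy => ⟨hw p hy.1, LinearMap.mem_range_self w y⟩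
    have hsurj := (LinearMap.injOn_iff_surjOn hS).mp
      (LinearMap.injOn_of_disjoint_ker le_rfl (hfit.disjoint.symm.mono_left inf_le_right))
    obtain ⟨z, hz, hzx⟩ := hsurj ⟨hw p hx, LinearMap.mem_range_self w x⟩
    refine Submodule.mem_sup.mpr ⟨x - z, ⟨sub_mem hx hz.1, ?_⟩, z, hz, sub_add_cancel x z⟩
    change w (x - z) = 0
    rw [map_sub, hzx, sub_self]
  rcases hψ _ _ hfit hsplit with hker | hrange
  · exact Or.inr ((isUnit_pow_iff (by omega)).mp ((LinearMap.isUnit_iff_ker_eq_bot w).mpr hker))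
  · exact Or.inl ⟨n, LinearMap.range_eq_bot.mp hrange⟩

theorem isUnit_or_isUnit_of_add_eq_one (hψ : IsIndecomposable ψ) {u v : End k V}
    (hu : ∀ p, MapsTo u (ψ p) (ψ p)) (huv : u + v = 1) :
    IsUnit u ∨ IsUnit v := by
  refine ((isNilpotent_or_isUnit hψ hu).imp (fun hnil => ?_) id).symm
  rw [eq_sub_of_add_eq' huv]
  exact hnil.isUnit_one_sub

theorem exists_linearEquiv_map_eq_of_isUnit_comp [FiniteDimensional k W]
    {χ : P → Submodule k W} {f : V →ₗ[k] W} {g : W →ₗ[k] V}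
    (hf : ∀ p, MapsTo f (ψ p) (χ p)) (hg : ∀ p, MapsTo g (χ p) (ψ p))
    (hgf : IsUnit (g ∘ₗ f)) (hdim : finrank k V = finrank k W) :
    ∃ e : V ≃ₗ[k] W, ∀ p, (ψ p).map (e : V →ₗ[k] W) = χ p := by
  have hbij : Function.Bijective (g ∘ f) := (End.isUnit_iff _).mp hgf
  have hf_inj : Function.Injective f := hbij.injective.of_comp
  have hg_inj : Function.Injective g :=
    (LinearMap.injective_iff_surjective_of_finrank_eq_finrank hdim.symm).mpr
      hbij.surjective.of_comp
  refine ⟨.ofBijective f ⟨hf_inj,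
    (LinearMap.injective_iff_surjective_of_finrank_eq_finrank hdim).mp hf_inj⟩, fun p => ?_⟩
  refine Submodule.eq_of_le_of_finrank_le (Submodule.map_le_iff_le_comap.mpr (hf p)) ?_
  calc finrank k (χ p) = finrank k ((χ p).map g) :=
        (Submodule.equivMapOfInjective g hg_inj _).finrank_eq
    _ ≤ finrank k (ψ p) := Submodule.finrank_mono (Submodule.map_le_iff_le_comap.mpr (hg p))
    _ = finrank k ((ψ p).map f) := (Submodule.equivMapOfInjective f hf_inj _).finrank_eq

end FiniteDimensional

theorem map_symm_dualMap_dualAnnihilator (g : V ≃ₗ[k] W) (S : Submodule k V) :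
    S.dualAnnihilator.map (g.symm.dualMap : Dual k V →ₗ[k] Dual k W) =
      (S.map (g : V →ₗ[k] W)).dualAnnihilator := by
  ext η
  simp only [Submodule.mem_map_equiv, Submodule.mem_dualAnnihilator, LinearEquiv.dualMap_symm,
    LinearEquiv.symm_symm, LinearEquiv.dualMap_apply]
  exact ⟨fun h w hw => by simpa using h _ hw, fun h w hw => by simpa using h (g w) (by simpa)⟩

theorem omegaForm_prodCongr_dualMap (g : V ≃ₗ[k] W) (a b : Dual k V × V) :
    OmegaForm k W (g.symm.dualMap.prodCongr g a) (g.symm.dualMap.prodCongr g b) =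
      OmegaForm k V a b := by
  simp [omegaForm_apply_s7]

theorem map_symplectification_prodCongr_dualMap (invol : P → P) {ψ : P → Submodule k V}
    {χ : P → Submodule k W} (g : V ≃ₗ[k] W) (hg : ∀ p, (ψ p).map (g : V →ₗ[k] W) = χ p)
    (p : P) :
    (symplectification invol ψ p).map (g.symm.dualMap.prodCongr g : _ →ₗ[k] Dual k W × W) =
      symplectification invol χ p := by
  rw [symplectification, LinearEquiv.coe_prodCongr, LinearMap.prodMap_map_prod, hg,
    dual, map_symm_dualMap_dualAnnihilator, hg]
  rfl

variable (k V) in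
noncomputable def dualDualProdEquiv [FiniteDimensional k V] :
    (Dual k (Dual k V) × Dual k V) ≃ₗ[k] (Dual k V × V) :=
  (LinearEquiv.prodComm k _ _).trans
    ((LinearEquiv.refl k _).prodCongr ((evalEquiv k V).symm.trans (LinearEquiv.neg k)))

theorem dualDualProdEquiv_evalEquiv [FiniteDimensional k V] (y : V) (ξ : Dual k V) :
    dualDualProdEquiv k V (evalEquiv k V y, ξ) = (ξ, -y) := by
  simp [dualDualProdEquiv, -evalEquiv_apply]

theorem omegaForm_dualDualProdEquiv [FiniteDimensional k V]
    (a b : Dual k (Dual k V) × Dual k V) :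
    OmegaForm k V (dualDualProdEquiv k V a) (dualDualProdEquiv k V b) =
      OmegaForm k (Dual k V) a b := by
  obtain ⟨φ, ξ⟩ := a
  obtain ⟨φ', ξ'⟩ := b
  obtain ⟨y, rfl⟩ := (evalEquiv k V).surjective φ
  obtain ⟨y', rfl⟩ := (evalEquiv k V).surjective φ'
  rw [dualDualProdEquiv_evalEquiv, dualDualProdEquiv_evalEquiv, omegaForm_apply_s7, omegaForm_apply_s7]
  simp only [map_neg, evalEquiv_apply, Dual.eval_apply]
  ring

theorem map_symplectification_dual_dualDualProdEquiv [FiniteDimensional k V]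
    {invol : P → P} (hinv : Function.Involutive invol) (ψ : P → Submodule k V) (p : P) :
    (symplectification invol (dual invol ψ) p).map
        (dualDualProdEquiv k V : _ →ₗ[k] Dual k V × V) = symplectification invol ψ p := by
  ext ⟨ξ, y⟩
  simp [Submodule.mem_map_equiv, symplectification, dual, dualDualProdEquiv, hinv p,
    Subspace.dualAnnihilator_dualAnnihilator_eq_map, (eval_apply_injective k (V := V)).eq_iff,
    and_comm]

theorem finrank_eq_of_dual_prod_equiv [FiniteDimensional k V] [FiniteDimensional k W]
    (F : (Dual k V × V) ≃ₗ[k] (Dual k W × W)) : finrank k V = finrank k W := by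
  have := F.finrank_eq
  rw [finrank_prod, finrank_prod, Subspace.dual_finrank_eq, Subspace.dual_finrank_eq] at this
  omega

theorem exists_iso_or_dual_iso_of_map_symplectification_eq [FiniteDimensional k V]
    [FiniteDimensional k W] {invol : P → P} {ψ : P → Submodule k V} {χ : P → Submodule k W}
    (hψ : IsIndecomposable ψ) (F : (Dual k V × V) ≃ₗ[k] (Dual k W × W))
    (hF : ∀ p, (symplectification invol ψ p).map (F : _ →ₗ[k] Dual k W × W) =
      symplectification invol χ p) :
    (∃ g : V ≃ₗ[k] W, ∀ p, (ψ p).map (g : V →ₗ[k] W) = χ p) ∨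
      ∃ g : V ≃ₗ[k] Dual k W, ∀ p, (ψ p).map (g : V →ₗ[k] Dual k W) = dual invol χ p := by
  have hF_mapsTo : ∀ p, MapsTo F (symplectification invol ψ p) (symplectification invol χ p) :=
    fun p x hx => hF p ▸ Submodule.mem_map_of_mem hx
  have hFsymm_mapsTo :
      ∀ p, MapsTo F.symm (symplectification invol χ p) (symplectification invol ψ p) :=
    fun p y hy => by rwa [SetLike.mem_coe, ← hF p, Submodule.mem_map_equiv] at hy
  let e : V →ₗ[k] W := .snd k _ _ ∘ₗ F.toLinearMap ∘ₗ .inr k _ _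
  let a : V →ₗ[k] Dual k W := .fst k _ _ ∘ₗ F.toLinearMap ∘ₗ .inr k _ _
  let r : W →ₗ[k] V := .snd k _ _ ∘ₗ F.symm.toLinearMap ∘ₗ .inr k _ _
  let s : Dual k W →ₗ[k] V := .snd k _ _ ∘ₗ F.symm.toLinearMap ∘ₗ .inl k _ _
  have he : ∀ p, MapsTo e (ψ p) (χ p) := fun p x hx => (hF_mapsTo p ⟨zero_mem _, hx⟩).2
  have ha : ∀ p, MapsTo a (ψ p) (dual invol χ p) := fun p x hx => (hF_mapsTo p ⟨zero_mem _, hx⟩).1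
  have hr : ∀ p, MapsTo r (χ p) (ψ p) := fun p y hy => (hFsymm_mapsTo p ⟨zero_mem _, hy⟩).2
  have hs : ∀ p, MapsTo s (dual invol χ p) (ψ p) :=
    fun p ξ hξ => (hFsymm_mapsTo p ⟨hξ, zero_mem _⟩).2
  have hsum : r ∘ₗ e + s ∘ₗ a = 1 := by
    ext x
    calc (F.symm (0, e x) + F.symm (a x, 0)).2
        = (F.symm (F (0, x))).2 := by rw [← map_add, Prod.mk_add_mk, zero_add, add_zero]; rfl
      _ = x := by rw [F.symm_apply_apply]
  have hdim := finrank_eq_of_dual_prod_equiv F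
  rcases isUnit_or_isUnit_of_add_eq_one hψ (fun p => (hr p).comp (he p)) hsum with h | h
  · exact .inl (exists_linearEquiv_map_eq_of_isUnit_comp he hr h hdim)
  · exact .inr (exists_linearEquiv_map_eq_of_isUnit_comp ha hs h
      (hdim.trans Subspace.dual_finrank_eq.symm))

end PosetRep

open PosetRep in
theorem symplectifications_isomorphic_iff_iso_or_dual_general
    {k V₁ V₂ P : Type*} [Field k]
    [AddCommGroup V₁] [Module k V₁] [FiniteDimensional k V₁]
    [AddCommGroup V₂] [Module k V₂] [FiniteDimensional k V₂]
    (invol : P → P) (hinv : Function.Involutive invol)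
    (ψ₁ : P → Submodule k V₁)
    (ψ₂ : P → Submodule k V₂)
    (hindec₁ : ∀ U' U'' : Submodule k V₁, IsCompl U' U'' →
      (∀ p, ψ₁ p = (ψ₁ p ⊓ U') ⊔ (ψ₁ p ⊓ U'')) → U' = ⊥ ∨ U'' = ⊥) :
    ((∃ g : V₁ ≃ₗ[k] V₂, ∀ p, (ψ₁ p).map (g : V₁ →ₗ[k] V₂) = ψ₂ p) ∨
      (∃ g : V₁ ≃ₗ[k] Module.Dual k V₂, ∀ p,
        (ψ₁ p).map (g : V₁ →ₗ[k] Module.Dual k V₂) = (ψ₂ (invol p)).dualAnnihilator))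
    ↔ (∃ F : (Module.Dual k V₁ × V₁) ≃ₗ[k] (Module.Dual k V₂ × V₂),
        (∀ a b : Module.Dual k V₁ × V₁,
          OmegaForm k V₂ (F a) (F b) = OmegaForm k V₁ a b) ∧
        ∀ p, ((ψ₁ (invol p)).dualAnnihilator.prod (ψ₁ p)).map
            (F : (Module.Dual k V₁ × V₁) →ₗ[k] (Module.Dual k V₂ × V₂)) =
          (ψ₂ (invol p)).dualAnnihilator.prod (ψ₂ p)) := by
  constructor
  · rintro (⟨g, hg⟩ | ⟨g, hg⟩)
    · exact ⟨_, omegaForm_prodCongr_dualMap g, map_symplectification_prodCongr_dualMap invol g hg⟩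
    · refine ⟨(g.symm.dualMap.prodCongr g).trans (dualDualProdEquiv k V₂),
        fun a b => (omegaForm_dualDualProdEquiv _ _).trans (omegaForm_prodCongr_dualMap g a b),
        fun p => ?_⟩
      change (symplectification invol ψ₁ p).map _ = symplectification invol ψ₂ p
      rw [LinearEquiv.coe_trans, Submodule.map_comp,
        map_symplectification_prodCongr_dualMap (χ := dual invol ψ₂) invol g hg,
        map_symplectification_dual_dualDualProdEquiv hinv]
  · rintro ⟨F, -, hF⟩
    exact exists_iso_or_dual_iso_of_map_symplectification_eq hindec₁ F hF

/-- Let `ψ₁`, `ψ₂` be indecomposable linear representations of a poset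
with order-reversing involution `(P, ⊥)` over a field of characteristic `≠ 2`.  Then
`ψ₁ ≅ ψ₂` or `ψ₁ ≅ ψ₂*` if and only if the symplectifications `ψ₁⁻` and `ψ₂⁻` are
isomorphic as symplectic representations. -/
theorem symplectifications_isomorphic_iff_iso_or_dual
    {k V₁ V₂ P : Type*} [Field k]
    [AddCommGroup V₁] [Module k V₁] [FiniteDimensional k V₁] [Nontrivial V₁]
    [AddCommGroup V₂] [Module k V₂] [FiniteDimensional k V₂] [Nontrivial V₂]
    [PartialOrder P] (h2 : (2 : k) ≠ 0)
    (invol : P → P) (hinv : Function.Involutive invol) (hanti : Antitone invol)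
    (ψ₁ : P → Submodule k V₁) (hmono₁ : Monotone ψ₁)
    (ψ₂ : P → Submodule k V₂) (hmono₂ : Monotone ψ₂)
    (hindec₁ : ∀ U' U'' : Submodule k V₁, IsCompl U' U'' →
      (∀ p, ψ₁ p = (ψ₁ p ⊓ U') ⊔ (ψ₁ p ⊓ U'')) → U' = ⊥ ∨ U'' = ⊥)
    (hindec₂ : ∀ U' U'' : Submodule k V₂, IsCompl U' U'' →
      (∀ p, ψ₂ p = (ψ₂ p ⊓ U') ⊔ (ψ₂ p ⊓ U'')) → U' = ⊥ ∨ U'' = ⊥) :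
    ((∃ g : V₁ ≃ₗ[k] V₂, ∀ p, (ψ₁ p).map (g : V₁ →ₗ[k] V₂) = ψ₂ p) ∨
      (∃ g : V₁ ≃ₗ[k] Module.Dual k V₂, ∀ p,
        (ψ₁ p).map (g : V₁ →ₗ[k] Module.Dual k V₂) = (ψ₂ (invol p)).dualAnnihilator))
    ↔ (∃ F : (Module.Dual k V₁ × V₁) ≃ₗ[k] (Module.Dual k V₂ × V₂),
        (∀ a b : Module.Dual k V₁ × V₁,
          OmegaForm k V₂ (F a) (F b) = OmegaForm k V₁ a b) ∧
        ∀ p, ((ψ₁ (invol p)).dualAnnihilator.prod (ψ₁ p)).map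
            (F : (Module.Dual k V₁ × V₁) →ₗ[k] (Module.Dual k V₂ × V₂)) =
          (ψ₂ (invol p)).dualAnnihilator.prod (ψ₂ p)) :=
  symplectifications_isomorphic_iff_iso_or_dual_general invol hinv ψ₁ ψ₂ hindec₁
end

section
/- Let V be a finite-dimensional vector space over a field k and let A₁, A₂, A₃, A₁₂, A₂₃ be subspaces of V forming a frame, i.e. V = A₁ ⊕ A₂ ⊕ A₃, A₁ + A₂ = A₁ ⊕ A₁₂ = A₂ ⊕ A₁₂, and A₂ + A₃ = A₂ ⊕ A₂₃ = A₃ ⊕ A₂₃. Define A₃₁ = (A₃ + A₁) ∩ (A₁₂ + A₂₃). Then A₃ + A₁ = A₃ ⊕ A₃₁ = A₁ ⊕ A₃₁. -/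
/-- (von Neumann frames.)  Let `A₁, A₂, A₃, A₁₂, A₂₃` be subspaces of
a finite-dimensional vector space `V` forming a frame: `V = A₁ ⊕ A₂ ⊕ A₃`,
`A₁ + A₂ = A₁ ⊕ A₁₂ = A₂ ⊕ A₁₂` and `A₂ + A₃ = A₂ ⊕ A₂₃ = A₃ ⊕ A₂₃`.  Put
`A₃₁ = (A₃ + A₁) ∩ (A₁₂ + A₂₃)`.  Then `A₃ + A₁ = A₃ ⊕ A₃₁ = A₁ ⊕ A₃₁`. -/
theorem frame_third_diagonal
    {k V : Type*} [Field k] [AddCommGroup V] [Module k V] [FiniteDimensional k V]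
    (A1 A2 A3 A12 A23 : Submodule k V)
    (hsum : A1 ⊔ A2 ⊔ A3 = ⊤)
    (h12 : A1 ⊓ A2 = ⊥) (h123 : (A1 ⊔ A2) ⊓ A3 = ⊥)
    (hA12a : A1 ⊔ A2 = A1 ⊔ A12) (hA12b : A1 ⊓ A12 = ⊥)
    (hA12c : A1 ⊔ A2 = A2 ⊔ A12) (hA12d : A2 ⊓ A12 = ⊥)
    (hA23a : A2 ⊔ A3 = A2 ⊔ A23) (hA23b : A2 ⊓ A23 = ⊥)
    (hA23c : A2 ⊔ A3 = A3 ⊔ A23) (hA23d : A3 ⊓ A23 = ⊥) :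
    (A3 ⊔ A1 = A3 ⊔ ((A3 ⊔ A1) ⊓ (A12 ⊔ A23)) ∧
      A3 ⊓ ((A3 ⊔ A1) ⊓ (A12 ⊔ A23)) = ⊥) ∧
    (A3 ⊔ A1 = A1 ⊔ ((A3 ⊔ A1) ⊓ (A12 ⊔ A23)) ∧
      A1 ⊓ ((A3 ⊔ A1) ⊓ (A12 ⊔ A23)) = ⊥) := by
  have hA12le : A12 ≤ A1 ⊔ A2 := by rw [hA12a]; exact le_sup_right
  have hA23le : A23 ≤ A2 ⊔ A3 := by rw [hA23a]; exact le_sup_right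
  -- key: an element of (A1 ⊔ A2) ⊓ (A2 ⊔ A3) lies in A2
  have hM : ∀ x : V, x ∈ A1 ⊔ A2 → x ∈ A2 ⊔ A3 → x ∈ A2 := by
    intro x hx1 hx2
    obtain ⟨a1, ha1, a2, ha2, rfl⟩ := Submodule.mem_sup.mp hx1
    obtain ⟨b2, hb2, b3, hb3, hb⟩ := Submodule.mem_sup.mp hx2
    have hb3' : b3 ∈ (A1 ⊔ A2) ⊓ A3 := by
      refine ⟨?_, hb3⟩
      have h : b3 = a1 + (a2 - b2) := by rw [eq_sub_of_add_eq' hb.symm]; abel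
      rw [h]
      exact Submodule.add_mem _ (Submodule.mem_sup_left ha1)
        (Submodule.mem_sup_right (Submodule.sub_mem _ ha2 hb2))
    rw [h123] at hb3'
    have hz : b3 = 0 := hb3'
    have h : a1 + a2 = b2 := by rw [← hb, hz, add_zero]
    rw [h]; exact hb2
  -- intersection with A3 is trivial
  have hi3 : A3 ⊓ ((A3 ⊔ A1) ⊓ (A12 ⊔ A23)) = ⊥ := by
    rw [eq_bot_iff]; rintro x ⟨hx3, -, hx⟩
    obtain ⟨u, hu, v, hv, rfl⟩ := Submodule.mem_sup.mp hx
    have hu2 : u ∈ A2 := by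
      refine hM u (hA12le hu) ?_
      have h : u = (u + v) - v := by abel
      rw [h]
      exact Submodule.sub_mem _ (Submodule.mem_sup_right hx3) (hA23le hv)
    have hu0 : u = 0 := by
      have : u ∈ A2 ⊓ A12 := ⟨hu2, hu⟩
      rwa [hA12d, Submodule.mem_bot] at this
    have hv0 : v = 0 := by
      have hv3 : v ∈ A3 := by rw [hu0, zero_add] at hx3; exact hx3
      have : v ∈ A3 ⊓ A23 := ⟨hv3, hv⟩
      rwa [hA23d, Submodule.mem_bot] at this
    simp [hu0, hv0]
  -- intersection with A1 is trivial
  have hi1 : A1 ⊓ ((A3 ⊔ A1) ⊓ (A12 ⊔ A23)) = ⊥ := by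
    rw [eq_bot_iff]; rintro x ⟨hx1, -, hx⟩
    obtain ⟨u, hu, v, hv, rfl⟩ := Submodule.mem_sup.mp hx
    have hv2 : v ∈ A2 := by
      refine hM v ?_ (hA23le hv)
      have h : v = (u + v) - u := by abel
      rw [h]
      exact Submodule.sub_mem _ (Submodule.mem_sup_left hx1) (hA12le hu)
    have hv0 : v = 0 := by
      have : v ∈ A2 ⊓ A23 := ⟨hv2, hv⟩
      rwa [hA23b, Submodule.mem_bot] at this
    have hu0 : u = 0 := by
      have hu1 : u ∈ A1 := by rw [hv0, add_zero] at hx1; exact hx1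
      have : u ∈ A1 ⊓ A12 := ⟨hu1, hu⟩
      rwa [hA12b, Submodule.mem_bot] at this
    simp [hu0, hv0]
  -- A1 ≤ A3 ⊔ A31
  have hs1 : A1 ≤ A3 ⊔ ((A3 ⊔ A1) ⊓ (A12 ⊔ A23)) := by
    intro a1 ha1
    have : a1 ∈ A2 ⊔ A12 := by rw [← hA12c]; exact Submodule.mem_sup_left ha1
    obtain ⟨a2, ha2, u, hu, hequ⟩ := Submodule.mem_sup.mp this
    have : a2 ∈ A3 ⊔ A23 := by rw [← hA23c]; exact Submodule.mem_sup_left ha2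
    obtain ⟨a3, ha3, v, hv, heqv⟩ := Submodule.mem_sup.mp this
    have hkey : a1 - a3 ∈ (A3 ⊔ A1) ⊓ (A12 ⊔ A23) := by
      constructor
      · exact Submodule.sub_mem _ (Submodule.mem_sup_right ha1)
          (Submodule.mem_sup_left ha3)
      · have h : a1 - a3 = u + v := by rw [← hequ, ← heqv]; abel
        rw [h]
        exact Submodule.add_mem _ (Submodule.mem_sup_left hu)
          (Submodule.mem_sup_right hv)
    have h : a1 = a3 + (a1 - a3) := by abel
    rw [h]
    exact Submodule.add_mem _ (Submodule.mem_sup_left ha3)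
      (Submodule.mem_sup_right hkey)
  -- A3 ≤ A1 ⊔ A31
  have hs3 : A3 ≤ A1 ⊔ ((A3 ⊔ A1) ⊓ (A12 ⊔ A23)) := by
    intro a3 ha3
    have : a3 ∈ A2 ⊔ A23 := by rw [← hA23a]; exact Submodule.mem_sup_right ha3
    obtain ⟨a2, ha2, v, hv, heqv⟩ := Submodule.mem_sup.mp this
    have : a2 ∈ A1 ⊔ A12 := by rw [← hA12a]; exact Submodule.mem_sup_right ha2
    obtain ⟨a1, ha1, u, hu, hequ⟩ := Submodule.mem_sup.mp this
    have hkey : a3 - a1 ∈ (A3 ⊔ A1) ⊓ (A12 ⊔ A23) := by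
      constructor
      · exact Submodule.sub_mem _ (Submodule.mem_sup_left ha3)
          (Submodule.mem_sup_right ha1)
      · have h : a3 - a1 = u + v := by rw [← heqv, ← hequ]; abel
        rw [h]
        exact Submodule.add_mem _ (Submodule.mem_sup_left hu)
          (Submodule.mem_sup_right hv)
    have h : a3 = a1 + (a3 - a1) := by abel
    rw [h]
    exact Submodule.add_mem _ (Submodule.mem_sup_left ha1)
      (Submodule.mem_sup_right hkey)
  have hle3 : A3 ⊔ ((A3 ⊔ A1) ⊓ (A12 ⊔ A23)) ≤ A3 ⊔ A1 :=
    sup_le le_sup_left inf_le_left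
  have hle1 : A1 ⊔ ((A3 ⊔ A1) ⊓ (A12 ⊔ A23)) ≤ A3 ⊔ A1 :=
    sup_le le_sup_right inf_le_left
  have e3 : A3 ⊔ A1 = A3 ⊔ ((A3 ⊔ A1) ⊓ (A12 ⊔ A23)) :=
    le_antisymm (sup_le le_sup_left hs1) hle3
  have e1 : A3 ⊔ A1 = A1 ⊔ ((A3 ⊔ A1) ⊓ (A12 ⊔ A23)) :=
    le_antisymm (sup_le hs3 le_sup_left) hle1
  exact ⟨⟨e3, hi3⟩, ⟨e1, hi1⟩⟩
end

section
/- Let k be a field, l ≥ 1, and let A be a nonzero l×l matrix over k whose characteristic polynomial q is irreducible over k. The following are equivalent: (1) A is similar to (I − A)ᵗ; (2) A is similar to I − A; (3) some root λ of q in an algebraic closure of k satisfies q(1 − λ) = 0; (4) every root λ of q in an algebraic closure of k satisfies q(1 − λ) = 0. Moreover, if char k ≠ 2, deg q > 1, and these equivalent conditions hold, then deg q is even. -/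
/-!
If `A` has irreducible characteristic polynomial `q`, then `q` determines `A` up to similarity:
for any nonzero vector `v`, the map `p ↦ p(A) v` identifies the polynomials of degree `< deg q`
with `kˡ` and turns `A` into multiplication by `X` modulo `q`. So all four conditions say that
`I - A` (equivalently its transpose) has characteristic polynomial `q`. That polynomial is
`± q(1 - X)`; if it shares a root `λ` with `q`, it is divisible by `q = minpoly λ`, hence equal
to `q`. Finally, if `q(1 - X) = -q(X)` and `2 ≠ 0`, then `q(1/2) = 0`, which is impossible for an
irreducible `q` of degree `> 1`.
-/

open Polynomial Module

namespace Module.End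
variable {k V W : Type*} [Field k] [AddCommGroup V] [Module k V] [AddCommGroup W] [Module k W]

theorem aeval_apply_eq_zero_iff_dvd {f : Module.End k V} {q : k[X]} (hq : Irreducible q)
    (hfq : aeval f q = 0) {v : V} (hv : v ≠ 0) (p : k[X]) : aeval f p v = 0 ↔ q ∣ p := by
  refine ⟨fun hp => ?_, ?_⟩
  · by_contra hdvd
    obtain ⟨a, b, hab⟩ := hq.coprime_iff_not_dvd.mpr hdvd
    apply hv
    simpa [hfq, hp] using congr(aeval f $hab v).symm
  · rintro ⟨r, rfl⟩
    simp [hfq]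

theorem exists_linearEquiv_degreeLT {f : Module.End k V} [FiniteDimensional k V] {q : k[X]}
    (hq : Irreducible q) (hfq : aeval f q = 0) (hdeg : q.natDegree = finrank k V) {v : V}
    (hv : v ≠ 0) : ∃ ψ : degreeLT k q.natDegree ≃ₗ[k] V, ∀ p, ψ p = aeval f (p : k[X]) v := by
  let ψ : degreeLT k q.natDegree →ₗ[k] V :=
    LinearMap.applyₗ v ∘ₗ (aeval f).toLinearMap ∘ₗ (degreeLT k q.natDegree).subtype
  have hinj : Function.Injective ψ := by
    rw [← LinearMap.ker_eq_bot, LinearMap.ker_eq_bot']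
    rintro ⟨p, hp⟩ hψ
    have hdvd : q ∣ p := (aeval_apply_eq_zero_iff_dvd hq hfq hv p).1 hψ
    rw [mem_degreeLT, ← degree_eq_natDegree hq.ne_zero] at hp
    exact Subtype.ext (eq_zero_of_dvd_of_degree_lt hdvd hp)
  have hdim : finrank k (degreeLT k q.natDegree) = finrank k V := by
    rw [(degreeLTEquiv k _).finrank_eq, finrank_fin_fun, hdeg]
  exact ⟨ψ.linearEquivOfInjective hinj hdim, fun _ => rfl⟩

theorem exists_linearEquiv_comp_eq_of_charpoly_eq [FiniteDimensional k V] [FiniteDimensional k W]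
    {f : Module.End k V} {g : Module.End k W} (hf : Irreducible f.charpoly)
    (hfg : g.charpoly = f.charpoly) : ∃ e : V ≃ₗ[k] W, e ∘ₗ f = g ∘ₗ e := by
  set q := f.charpoly
  have hfq : aeval f q = 0 := LinearMap.aeval_self_charpoly f
  have hgq : aeval g q = 0 := hfg ▸ LinearMap.aeval_self_charpoly g
  have hV : q.natDegree = finrank k V := LinearMap.charpoly_natDegree f
  have hW : q.natDegree = finrank k W := hfg ▸ LinearMap.charpoly_natDegree g
  have hpos : 0 < q.natDegree := hf.natDegree_pos
  obtain ⟨v, hv⟩ := (Module.finrank_pos_iff_exists_ne_zero (R := k)).1 (hV ▸ hpos)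
  obtain ⟨w, hw⟩ := (Module.finrank_pos_iff_exists_ne_zero (R := k)).1 (hW ▸ hpos)
  obtain ⟨ψf, hψf⟩ := exists_linearEquiv_degreeLT hf hfq hV hv
  obtain ⟨ψg, hψg⟩ := exists_linearEquiv_degreeLT hf hgq hW hw
  set e := ψf.symm.trans ψg
  have he : ∀ p : k[X], e (aeval f p v) = aeval g p w := by
    intro p
    have hmem : p %ₘ q ∈ degreeLT k q.natDegree := by
      rw [mem_degreeLT, ← degree_eq_natDegree hf.ne_zero]
      exact degree_modByMonic_lt p (LinearMap.charpoly_monic f)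
    rw [← aeval_modByMonic_eq_self_of_root hfq,
      ← aeval_modByMonic_eq_self_of_root hgq,
      ← hψf ⟨_, hmem⟩, ← hψg ⟨_, hmem⟩]
    simp [e]
  refine ⟨e, LinearMap.ext fun x => ?_⟩
  obtain ⟨p, rfl⟩ : ∃ p : k[X], aeval f p v = x := ⟨ψf.symm x, by rw [← hψf, ψf.apply_symm_apply]⟩
  calc (e ∘ₗ f) (aeval f p v) = e (aeval f (X * p) v) := by simp [mul_apply]
    _ = aeval g (X * p) w := he _
    _ = (g ∘ₗ e) (aeval f p v) := by simp [he, mul_apply]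

end Module.End

namespace Polynomial
variable {k : Type*} [Field k]

theorem eq_of_monic_of_irreducible_of_aeval_eq_zero {L : Type*} [Ring L] [Nontrivial L]
    [Algebra k L] {p q : k[X]} (hp : Irreducible p) (hpm : p.Monic) (hqm : q.Monic)
    (hdeg : q.natDegree ≤ p.natDegree) {x : L} (hpx : aeval x p = 0) (hqx : aeval x q = 0) :
    q = p := by
  refine eq_of_monic_of_dvd_of_natDegree_le hpm hqm ?_ hdeg
  rw [minpoly.eq_of_irreducible_of_monic hp hpx hpm]
  exact minpoly.dvd k x hqx

theorem even_natDegree_of_neg_one_pow_mul_comp_one_sub_eq {q : k[X]} (h2 : (2 : k) ≠ 0)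
    (hq : Irreducible q) (hdeg : q.natDegree ≠ 1)
    (h : (-1) ^ q.natDegree * q.comp (1 - X) = q) : Even q.natDegree := by
  by_contra hodd
  rw [Nat.not_even_iff_odd] at hodd
  rw [hodd.neg_one_pow, neg_one_mul] at h
  have hhalf : 1 - (2⁻¹ : k) = 2⁻¹ := by field_simp; norm_num
  have hroot : q.eval 2⁻¹ = 0 := by
    have := congr(eval 2⁻¹ $h)
    rw [eval_neg, eval_comp, eval_sub, eval_one, eval_X, hhalf, neg_eq_iff_add_eq_zero,
      ← two_mul] at this
    exact (mul_eq_zero.1 this).resolve_left h2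
  exact hq.not_isRoot_of_natDegree_ne_one hdeg hroot

end Polynomial

namespace Matrix
variable {n R k : Type*} [Fintype n] [DecidableEq n] [CommRing R] [Field k]

theorem charpoly_conj_of_isUnit_det {S : Matrix n n R} (hS : IsUnit S.det) (A : Matrix n n R) :
    (S * A * S⁻¹).charpoly = A.charpoly := by
  rw [charpoly_mul_comm, ← Matrix.mul_assoc, nonsing_inv_mul _ hS, Matrix.one_mul]

theorem exists_conj_eq_of_charpoly_eq {A B : Matrix n n k} (hA : Irreducible A.charpoly)
    (hAB : B.charpoly = A.charpoly) : ∃ S : Matrix n n k, IsUnit S.det ∧ S * A * S⁻¹ = B := by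
  obtain ⟨e, he⟩ := Module.End.exists_linearEquiv_comp_eq_of_charpoly_eq
    (f := toLin' A) (g := toLin' B) (by rwa [charpoly_toLin'])
    (by rw [charpoly_toLin', charpoly_toLin', hAB])
  set S := LinearMap.toMatrix' (e : (n → k) →ₗ[k] n → k)
  have hS : IsUnit S.det := by
    rw [← isUnit_iff_isUnit_det, LinearMap.isUnit_toMatrix'_iff, Module.End.isUnit_iff]
    exact e.bijective
  have hSA : S * A = B * S := by
    simpa [S, LinearMap.toMatrix'_comp] using congr(LinearMap.toMatrix' $he)
  exact ⟨S, hS, by rw [hSA, mul_nonsing_inv_cancel_right _ _ hS]⟩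

theorem exists_conj_eq_iff_charpoly_eq {A B : Matrix n n k} (hA : Irreducible A.charpoly) :
    (∃ S : Matrix n n k, IsUnit S.det ∧ S * A * S⁻¹ = B) ↔ B.charpoly = A.charpoly :=
  ⟨fun ⟨_, hS, hSA⟩ => hSA ▸ charpoly_conj_of_isUnit_det hS A, exists_conj_eq_of_charpoly_eq hA⟩

theorem charpoly_neg (M : Matrix n n R) :
    (-M).charpoly = (-1) ^ Fintype.card n * M.charpoly.comp (-X) := by
  have h : (compRingHom (-X : R[X])).mapMatrix (charmatrix M) = -charmatrix (-M) := by
    ext i j : 1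
    by_cases hij : i = j
    · subst hij; simp [sub_eq_add_neg, add_comm]
    · simp [charmatrix_apply_ne _ _ _ hij]
  have h2 : M.charpoly.comp (-X) = (-1) ^ Fintype.card n * (-M).charpoly := by
    rw [charpoly, ← coe_compRingHom_apply, RingHom.map_det, h, det_neg, charpoly]
  rw [h2, ← mul_assoc, ← mul_pow, neg_one_mul, neg_neg, one_pow, one_mul]

theorem charpoly_one_sub (M : Matrix n n R) :
    (1 - M).charpoly = (-1) ^ Fintype.card n * M.charpoly.comp (1 - X) := by
  have h := charpoly_sub_scalar M 1
  rw [show (1 : Matrix n n R) - M = -(M - scalar n 1) by simp, charpoly_neg, h, comp_assoc]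
  simp [sub_eq_neg_add]

theorem aeval_charpoly_one_sub {L : Type*} [CommRing L] [Algebra R L] (M : Matrix n n R) (x : L) :
    aeval x (1 - M).charpoly = (-1) ^ Fintype.card n * aeval (1 - x) M.charpoly := by
  simp [charpoly_one_sub, aeval_comp]

end Matrix

open Matrix Polynomial

theorem similar_to_one_sub_transpose_tfae_general
    {k : Type*} [Field k] {l : ℕ}
    (A : Matrix (Fin l) (Fin l) k)
    (hirr : Irreducible (Matrix.charpoly A)) :
    List.TFAE
      [ (∃ S : Matrix (Fin l) (Fin l) k, IsUnit S.det ∧ S * A * S⁻¹ = (1 - A)ᵀ),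
        (∃ S : Matrix (Fin l) (Fin l) k, IsUnit S.det ∧ S * A * S⁻¹ = 1 - A),
        (∃ lam : AlgebraicClosure k, aeval lam (Matrix.charpoly A) = 0 ∧
          aeval (1 - lam) (Matrix.charpoly A) = 0),
        (∀ lam : AlgebraicClosure k, aeval lam (Matrix.charpoly A) = 0 →
          aeval (1 - lam) (Matrix.charpoly A) = 0) ]
    ∧ ((2 : k) ≠ 0 → 1 < (Matrix.charpoly A).natDegree →
        (∃ S : Matrix (Fin l) (Fin l) k, IsUnit S.det ∧ S * A * S⁻¹ = 1 - A) →
        Even (Matrix.charpoly A).natDegree) := by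
  have hsim (B : Matrix (Fin l) (Fin l) k) := exists_conj_eq_iff_charpoly_eq (B := B) hirr
  have hroot (x : AlgebraicClosure k) :
      aeval x (1 - A).charpoly = (-1) ^ l * aeval (1 - x) A.charpoly := by
    simpa using aeval_charpoly_one_sub A x
  refine ⟨?_, fun h2 hdeg h => ?_⟩
  · tfae_have 1 ↔ 2 := by rw [hsim, hsim, charpoly_transpose]
    tfae_have 2 → 4 := fun h x hx => by
      rw [hsim] at h
      rw [← neg_one_pow_mul_eq_zero_iff (n := l), ← hroot, h, hx]
    tfae_have 4 → 3 := fun h => by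
      obtain ⟨x, hx⟩ := IsAlgClosed.exists_aeval_eq_zero (AlgebraicClosure k) A.charpoly
        (degree_pos_of_irreducible hirr).ne'
      exact ⟨x, hx, h x hx⟩
    tfae_have 3 → 2 := fun ⟨x, hx, h1x⟩ => (hsim _).2 <|
      eq_of_monic_of_irreducible_of_aeval_eq_zero hirr A.charpoly_monic (1 - A).charpoly_monic
        (by simp) hx (by rw [hroot, h1x, mul_zero])
    tfae_finish
  · refine even_natDegree_of_neg_one_pow_mul_comp_one_sub_eq h2 hirr hdeg.ne' ?_
    have hA := charpoly_one_sub A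
    rw [(hsim _).1 h, Fintype.card_fin] at hA
    rw [charpoly_natDegree_eq_dim, Fintype.card_fin, ← hA]

/-- Let `A` be a nonzero `l×l` matrix over a field `k` whose
characteristic polynomial `q` is irreducible.  TFAE: (1) `A` is similar to `(I − A)ᵗ`;
(2) `A` is similar to `I − A`; (3) some root `λ` of `q` in an algebraic closure of `k`
satisfies `q(1 − λ) = 0`; (4) every root of `q` in an algebraic closure satisfies
`q(1 − λ) = 0`.  Moreover if `char k ≠ 2`, `deg q > 1` and these hold, then `deg q`
is even. -/
theorem similar_to_one_sub_transpose_tfae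
    {k : Type*} [Field k] {l : ℕ} (hl : 0 < l)
    (A : Matrix (Fin l) (Fin l) k) (hA : A ≠ 0)
    (hirr : Irreducible (Matrix.charpoly A)) :
    List.TFAE
      [ (∃ S : Matrix (Fin l) (Fin l) k, IsUnit S.det ∧ S * A * S⁻¹ = (1 - A)ᵀ),
        (∃ S : Matrix (Fin l) (Fin l) k, IsUnit S.det ∧ S * A * S⁻¹ = 1 - A),
        (∃ lam : AlgebraicClosure k, aeval lam (Matrix.charpoly A) = 0 ∧
          aeval (1 - lam) (Matrix.charpoly A) = 0),
        (∀ lam : AlgebraicClosure k, aeval lam (Matrix.charpoly A) = 0 →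
          aeval (1 - lam) (Matrix.charpoly A) = 0) ]
    ∧ ((2 : k) ≠ 0 → 1 < (Matrix.charpoly A).natDegree →
        (∃ S : Matrix (Fin l) (Fin l) k, IsUnit S.det ∧ S * A * S⁻¹ = 1 - A) →
        Even (Matrix.charpoly A).natDegree) :=
  similar_to_one_sub_transpose_tfae_general A hirr
end

section
/- Let k be a field of characteristic ≠ 2, l ≥ 1, and let A be a nonzero l×l matrix over k whose characteristic polynomial r is irreducible over k and satisfies r(−A) = 0. Then there exist an invertible symmetric matrix T over k with T A T⁻¹ = −Aᵗ, and an invertible skew-symmetric matrix T' over k with T' A T'⁻¹ = −Aᵗ. -/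
open Matrix Polynomial

namespace Stmt14Aux

variable {k : Type*} [Field k] {l : ℕ}

/-- Matrix whose `j`-th column is `B^j *ᵥ w`. -/
def colMat (B : Matrix (Fin l) (Fin l) k) (w : Fin l → k) : Matrix (Fin l) (Fin l) k :=
  Matrix.of fun i j => ((B ^ (j : ℕ)) *ᵥ w) i

/-- Companion-type matrix of a polynomial. -/
def cmat (r : k[X]) (l : ℕ) : Matrix (Fin l) (Fin l) k :=
  Matrix.of fun i j =>
    if ((j : ℕ) + 1 < l) then (if (i : ℕ) = (j : ℕ) + 1 then 1 else 0) else -(r.coeff i)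

lemma sum_mulVec {ι : Type*} (s : Finset ι) (M : ι → Matrix (Fin l) (Fin l) k)
    (w : Fin l → k) : (∑ j ∈ s, M j) *ᵥ w = ∑ j ∈ s, (M j) *ᵥ w := by
  ext i
  rw [Finset.sum_apply]
  simp only [Matrix.mulVec, dotProduct, Matrix.sum_apply, Finset.sum_mul]
  exact Finset.sum_comm

lemma aeval_transpose (M : Matrix (Fin l) (Fin l) k) (p : k[X]) :
    aeval Mᵀ p = (aeval M p)ᵀ := by
  rw [aeval_eq_sum_range, aeval_eq_sum_range]
  simp [Matrix.transpose_sum, Matrix.transpose_smul, Matrix.transpose_pow]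

/-- Any nonzero vector is cyclic for a matrix annihilated by an irreducible
polynomial of degree `l`. -/
lemma colMat_isUnit_det (r : k[X]) (hirr : Irreducible r) (hdeg : r.natDegree = l)
    (B : Matrix (Fin l) (Fin l) k) (hB : aeval B r = 0)
    (w : Fin l → k) (hw : w ≠ 0) : IsUnit (colMat B w).det := by
  rw [← Matrix.isUnit_iff_isUnit_det, ← Matrix.linearIndependent_cols_iff_isUnit]
  rw [Fintype.linearIndependent_iff]
  intro g hg
  by_contra hne
  push_neg at hne
  obtain ⟨i0, hi0⟩ := hne
  have hl : 0 < l := i0.pos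
  set p : k[X] := ∑ j : Fin l, C (g j) * X ^ (j : ℕ) with hp
  have hcoeff : ∀ i : Fin l, p.coeff (i : ℕ) = g i := by
    intro i
    rw [hp, Polynomial.finset_sum_coeff]
    rw [Finset.sum_eq_single i]
    · simp
    · intro b _ hb
      rw [coeff_C_mul, coeff_X_pow, if_neg, mul_zero]
      exact fun h => hb (Fin.ext h.symm)
    · simp
  have hp0 : p ≠ 0 := fun h => hi0 (by rw [← hcoeff i0, h, coeff_zero])
  have hdegp : p.natDegree < l := by
    have h1 : p.natDegree ≤ l - 1 := by
      apply Polynomial.natDegree_sum_le_of_forall_le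
      intro j _
      exact le_trans (natDegree_C_mul_X_pow_le _ _) (Nat.le_sub_one_of_lt j.isLt)
    omega
  have hnd : ¬ r ∣ p := fun hdvd => by
    have := Polynomial.natDegree_le_of_dvd hdvd hp0
    omega
  obtain ⟨a, b, hab⟩ := hirr.coprime_iff_not_dvd.mpr hnd
  have haev : (aeval B p) *ᵥ w = 0 := by
    have h1 : aeval B p = ∑ j : Fin l, g j • B ^ (j : ℕ) := by
      rw [hp, map_sum]
      refine Finset.sum_congr rfl fun j _ => ?_
      rw [_root_.map_mul, aeval_C, map_pow, aeval_X, Algebra.smul_def]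
    rw [h1, sum_mulVec]
    have h2 : ∀ j : Fin l, (g j • B ^ (j : ℕ)) *ᵥ w = g j • ((B ^ (j : ℕ)) *ᵥ w) := by
      intro j; rw [Matrix.smul_mulVec]
    rw [Finset.sum_congr rfl fun j _ => h2 j]
    have h3 : ∀ j : Fin l, (B ^ (j : ℕ)) *ᵥ w = (colMat B w)ᵀ j := by
      intro j; ext i; rfl
    rw [Finset.sum_congr rfl fun j _ => by rw [h3 j]]
    exact hg
  have hw0 : w = 0 := by
    have h1 : (aeval B (a * r + b * p)) *ᵥ w = w := by
      rw [hab, _root_.map_one, Matrix.one_mulVec]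
    rw [_root_.map_add, _root_.map_mul, _root_.map_mul, hB, mul_zero, zero_add, ← Matrix.mulVec_mulVec, haev, Matrix.mulVec_zero] at h1
    exact h1.symm
  exact hw hw0

lemma pow_card (r : k[X]) (hmon : r.Monic) (hdeg : r.natDegree = l)
    (B : Matrix (Fin l) (Fin l) k) (hB : aeval B r = 0) :
    B ^ l = -∑ m : Fin l, r.coeff (m : ℕ) • B ^ (m : ℕ) := by
  have h : (0 : Matrix (Fin l) (Fin l) k)
      = ∑ i ∈ Finset.range (l + 1), r.coeff i • B ^ i := by
    rw [← hB, aeval_eq_sum_range, hdeg]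
  rw [Finset.sum_range_succ] at h
  have hcl : r.coeff l = 1 := by rw [← hdeg]; exact hmon.coeff_natDegree
  rw [hcl, one_smul] at h
  have h2 : B ^ l = -∑ i ∈ Finset.range l, r.coeff i • B ^ i :=
    eq_neg_of_add_eq_zero_right h.symm
  rw [h2, Fin.sum_univ_eq_sum_range (fun m => r.coeff m • B ^ m)]

lemma mul_colMat (r : k[X]) (hmon : r.Monic) (hdeg : r.natDegree = l)
    (B : Matrix (Fin l) (Fin l) k) (hB : aeval B r = 0) (w : Fin l → k) :
    B * colMat B w = colMat B w * cmat r l := by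
  have hBl := pow_card r hmon hdeg B hB
  ext i j
  have hlhs : (B * colMat B w) i j = ((B ^ ((j : ℕ) + 1)) *ᵥ w) i := by
    rw [pow_succ', ← Matrix.mulVec_mulVec]
    rfl
  rw [hlhs, Matrix.mul_apply]
  by_cases h : (j : ℕ) + 1 < l
  · have key : ∀ m : Fin l, colMat B w i m * cmat r l m j =
        if m = (⟨(j : ℕ) + 1, h⟩ : Fin l) then ((B ^ ((j : ℕ) + 1)) *ᵥ w) i else 0 := by
      intro m
      simp only [colMat, cmat, Matrix.of_apply, if_pos h]
      by_cases hm : m = (⟨(j : ℕ) + 1, h⟩ : Fin l)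
      · subst hm; simp
      · rw [if_neg, if_neg hm, mul_zero]
        exact fun hh => hm (Fin.ext hh)
    rw [Finset.sum_congr rfl fun m _ => key m, Finset.sum_ite_eq' Finset.univ]
    simp
  · have hjl : (j : ℕ) + 1 = l := by have := j.isLt; omega
    have hrhs : ∀ m : Fin l, colMat B w i m * cmat r l m j
        = -(r.coeff (m : ℕ) * ((B ^ (m : ℕ)) *ᵥ w) i) := by
      intro m
      simp only [colMat, cmat, Matrix.of_apply, if_neg h]
      ring
    rw [Finset.sum_congr rfl fun m _ => hrhs m]
    rw [hjl, hBl, Matrix.neg_mulVec, sum_mulVec]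
    simp only [Pi.neg_apply, Finset.sum_apply, ← Finset.sum_neg_distrib]
    refine Finset.sum_congr rfl fun m _ => ?_
    rw [Matrix.smul_mulVec]
    simp [smul_eq_mul]

lemma unit_of_intertwine (r : k[X]) (hirr : Irreducible r) (hdeg : r.natDegree = l)
    (A B : Matrix (Fin l) (Fin l) k) (hBr : aeval B r = 0)
    (T : Matrix (Fin l) (Fin l) k) (hT : T * A = B * T) (hT0 : T ≠ 0) :
    IsUnit T.det := by
  have hex : ∃ u, T *ᵥ u ≠ 0 := by
    by_contra hc
    push_neg at hc
    apply hT0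
    ext i j
    have h := congrFun (hc (Pi.single j 1)) i
    rw [Matrix.mulVec_single] at h
    simpa using h
  obtain ⟨u, hu⟩ := hex
  have hpow : ∀ n : ℕ, T * A ^ n = B ^ n * T := by
    intro n
    induction n with
    | zero => simp
    | succ n ih =>
      rw [pow_succ, pow_succ, ← mul_assoc, ih, mul_assoc, hT, ← mul_assoc]
  have hmat : T * colMat A u = colMat B (T *ᵥ u) := by
    ext i j
    have h1 : (T * colMat A u) i j = (T *ᵥ ((A ^ (j : ℕ)) *ᵥ u)) i := rfl
    rw [h1, Matrix.mulVec_mulVec, hpow, ← Matrix.mulVec_mulVec]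
    rfl
  have h1 := colMat_isUnit_det r hirr hdeg B hBr (T *ᵥ u) hu
  rw [← hmat, Matrix.det_mul] at h1
  exact isUnit_of_mul_isUnit_left h1

end Stmt14Aux

open Stmt14Aux

/-- Let `k` be a field of characteristic `≠ 2` and `A` a nonzero
`l×l` matrix over `k` whose characteristic polynomial `r` is irreducible and satisfies
`r(−A) = 0`.  Then there exist an invertible symmetric matrix `T` with
`T A T⁻¹ = −Aᵗ`, and an invertible skew-symmetric matrix `T'` with `T' A T'⁻¹ = −Aᵗ`. -/
theorem symmetric_and_skew_congruences_to_neg_transpose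
    {k : Type*} [Field k] (h2 : (2 : k) ≠ 0) {l : ℕ} (hl : 0 < l)
    (A : Matrix (Fin l) (Fin l) k) (hA : A ≠ 0)
    (hirr : Irreducible (Matrix.charpoly A))
    (hneg : aeval (-A) (Matrix.charpoly A) = 0) :
    (∃ T : Matrix (Fin l) (Fin l) k, IsUnit T.det ∧ Tᵀ = T ∧ T * A * T⁻¹ = -Aᵀ) ∧
    (∃ T' : Matrix (Fin l) (Fin l) k, IsUnit T'.det ∧ T'ᵀ = -T' ∧ T' * A * T'⁻¹ = -Aᵀ) := by
  set r : Polynomial k := Matrix.charpoly A with hr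
  have hmon : r.Monic := Matrix.charpoly_monic A
  have hdeg : r.natDegree = l := by
    rw [hr, Matrix.charpoly_natDegree_eq_dim, Fintype.card_fin]
  have hAr : aeval A r = 0 := Matrix.aeval_self_charpoly A
  have hBr : aeval (-Aᵀ) r = 0 := by
    have he : (-Aᵀ) = (-A)ᵀ := (Matrix.transpose_neg A).symm
    rw [he, aeval_transpose, hneg, Matrix.transpose_zero]
  -- A is invertible
  have hAdet : IsUnit A.det := by
    rw [Matrix.det_eq_sign_charpoly_coeff, isUnit_iff_ne_zero]
    refine mul_ne_zero (pow_ne_zero _ (neg_ne_zero.mpr one_ne_zero)) ?_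
    intro hc0
    have hXdvd : X ∣ r := Polynomial.X_dvd_iff.mpr hc0
    obtain ⟨s, hs⟩ := hXdvd
    rcases hirr.isUnit_or_isUnit hs with h | h
    · exact Polynomial.not_isUnit_X h
    · obtain ⟨c, hc⟩ := Polynomial.isUnit_iff.mp h
      have hcc : c = 1 := by
        have hm := hmon
        rw [Polynomial.Monic, hs, ← hc.2, leadingCoeff_mul, leadingCoeff_X, one_mul,
          leadingCoeff_C] at hm
        exact hm
      have hrX : r = X := by rw [hs, ← hc.2, hcc, Polynomial.C_1, mul_one]
      apply hA
      have := hAr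
      rwa [hrX, aeval_X] at this
  -- cyclic bases for A and -Aᵀ
  set w : Fin l → k := Pi.single (⟨0, hl⟩ : Fin l) 1 with hwdef
  have hw : w ≠ 0 := by
    intro h
    have := congrFun h ⟨0, hl⟩
    simp [hwdef] at this
  set P : Matrix (Fin l) (Fin l) k := colMat A w with hPdef
  set Q : Matrix (Fin l) (Fin l) k := colMat (-Aᵀ) w with hQdef
  have hP : IsUnit P.det := colMat_isUnit_det r hirr hdeg A hAr w hw
  have hQ : IsUnit Q.det := colMat_isUnit_det r hirr hdeg (-Aᵀ) hBr w hw
  have hAP : A * P = P * cmat r l := mul_colMat r hmon hdeg A hAr w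
  have hBQ : (-Aᵀ) * Q = Q * cmat r l := mul_colMat r hmon hdeg (-Aᵀ) hBr w
  have hPinv1 : P * P⁻¹ = 1 := Matrix.mul_nonsing_inv _ hP
  have hPinv2 : P⁻¹ * P = 1 := Matrix.nonsing_inv_mul _ hP
  set T₀ : Matrix (Fin l) (Fin l) k := Q * P⁻¹ with hT₀def
  have hT₀det : IsUnit T₀.det := by
    rw [hT₀def, Matrix.det_mul]
    exact hQ.mul (Matrix.isUnit_nonsing_inv_det _ hP)
  have h1 : P⁻¹ * A * P = cmat r l := by
    rw [mul_assoc, hAP, ← mul_assoc, hPinv2, one_mul]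
  have h1' : P⁻¹ * A = cmat r l * P⁻¹ := by
    have h := congrArg (· * P⁻¹) h1
    rw [← h, mul_assoc, mul_assoc, hPinv1, mul_one]
  have hT₀ : T₀ * A = (-Aᵀ) * T₀ := by
    calc T₀ * A = Q * (P⁻¹ * A) := by rw [hT₀def, mul_assoc]
      _ = Q * (cmat r l * P⁻¹) := by rw [h1']
      _ = (Q * cmat r l) * P⁻¹ := by rw [mul_assoc]
      _ = ((-Aᵀ) * Q) * P⁻¹ := by rw [← hBQ]
      _ = (-Aᵀ) * T₀ := by rw [hT₀def, mul_assoc]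
  have transfer : ∀ X : Matrix (Fin l) (Fin l) k, X * A = (-Aᵀ) * X →
      Xᵀ * A = (-Aᵀ) * Xᵀ := by
    intro X hX
    have h : (X * A)ᵀ = ((-Aᵀ) * X)ᵀ := congrArg Matrix.transpose hX
    rw [Matrix.transpose_mul, Matrix.transpose_mul, Matrix.transpose_neg,
      Matrix.transpose_transpose, mul_neg] at h
    rw [neg_mul, h, neg_neg]
  have hT₀t : T₀ᵀ * A = (-Aᵀ) * T₀ᵀ := transfer T₀ hT₀
  -- conversion helper
  have final : ∀ X : Matrix (Fin l) (Fin l) k, IsUnit X.det → X * A = (-Aᵀ) * X →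
      X * A * X⁻¹ = -Aᵀ := by
    intro X hX hXA
    rw [hXA, mul_assoc, Matrix.mul_nonsing_inv _ hX, mul_one]
  -- multiplying a solution by A gives a solution
  have hmulA : ∀ X : Matrix (Fin l) (Fin l) k, X * A = (-Aᵀ) * X →
      (X * A) * A = (-Aᵀ) * (X * A) := by
    intro X hX
    calc X * A * A = (-Aᵀ) * X * A := by rw [hX]
      _ = (-Aᵀ) * (X * A) := by rw [mul_assoc]
  by_cases hS : T₀ + T₀ᵀ = 0
  · -- T₀ is skew-symmetric; T₀ * A is symmetric
    have hskew : T₀ᵀ = -T₀ := by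
      have := hS
      rwa [add_comm, add_eq_zero_iff_eq_neg] at this
    have hWdet : IsUnit (T₀ * A).det := by
      rw [Matrix.det_mul]; exact hT₀det.mul hAdet
    have hWsym : (T₀ * A)ᵀ = T₀ * A := by
      rw [Matrix.transpose_mul, hskew, mul_neg, hT₀, neg_mul]
    refine ⟨⟨T₀ * A, hWdet, hWsym, final _ hWdet (hmulA T₀ hT₀)⟩,
      ⟨T₀, hT₀det, hskew, final _ hT₀det hT₀⟩⟩
  · -- S := T₀ + T₀ᵀ is nonzero, symmetric, invertible; S * A is skew
    set S : Matrix (Fin l) (Fin l) k := T₀ + T₀ᵀ with hSdef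
    have hSV : S * A = (-Aᵀ) * S := by
      rw [hSdef, add_mul, hT₀, hT₀t, mul_add]
    have hSdet : IsUnit S.det :=
      unit_of_intertwine r hirr hdeg A (-Aᵀ) hBr S hSV hS
    have hSsym : Sᵀ = S := by
      rw [hSdef, Matrix.transpose_add, Matrix.transpose_transpose, add_comm]
    have hWdet : IsUnit (S * A).det := by
      rw [Matrix.det_mul]; exact hSdet.mul hAdet
    have hWskew : (S * A)ᵀ = -(S * A) := by
      rw [Matrix.transpose_mul, hSsym, hSV, neg_mul, neg_neg]
    refine ⟨⟨S, hSdet, hSsym, final _ hSdet hSV⟩,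
      ⟨S * A, hWdet, hWskew, final _ hWdet (hmulA S hSV)⟩⟩
end

section
/- Let k be a field of characteristic ≠ 2, n ≥ 1, and let A = (1/2)I + N be the n×n matrix over k where N is the nilpotent matrix with N_{i,i+1} = 1 for 1 ≤ i ≤ n−1 and all other entries 0. Let M be the n×n matrix with M_{ij} = (−1)^{j+1} when i + j = n + 1 and M_{ij} = 0 otherwise. Then M is invertible, M A M⁻¹ = (I − A)ᵗ, and Mᵗ = (−1)^{n+1} M; in particular M is skew-symmetric when n is even and symmetric when n is odd. -/
open Matrix

private lemma negpow_congr {k : Type*} [Field k] {a b : ℕ} (h : a % 2 = b % 2) :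
    (-1 : k) ^ a = (-1 : k) ^ b := by
  rcases Nat.even_or_odd a with ha | ha
  · have hb : Even b := Nat.even_iff.mpr (by rw [← h]; exact Nat.even_iff.mp ha)
    rw [ha.neg_one_pow, hb.neg_one_pow]
  · have hb : Odd b := Nat.odd_iff.mpr (by rw [← h]; exact Nat.odd_iff.mp ha)
    rw [ha.neg_one_pow, hb.neg_one_pow]

private lemma sum_left {k : Type*} [Field k] {n : ℕ} (i : Fin n) (g : Fin n → k) :
    (∑ j : Fin n, (if (i : ℕ) + (j : ℕ) + 1 = n then (-1 : k) ^ (j : ℕ) else 0) * g j)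
      = (-1 : k) ^ (n - 1 - (i : ℕ)) * g ⟨n - 1 - (i : ℕ), by omega⟩ := by
  have hi := i.isLt
  rw [Finset.sum_eq_single (⟨n - 1 - (i : ℕ), by omega⟩ : Fin n)]
  · simp [show (i : ℕ) + (n - 1 - (i : ℕ)) + 1 = n from by omega]
  · intro b _ hb
    have : ¬((i : ℕ) + (b : ℕ) + 1 = n) := by
      intro h; exact hb (Fin.ext (by simp; omega))
    simp [this]
  · intro h; exact absurd (Finset.mem_univ _) h

private lemma sum_right {k : Type*} [Field k] {n : ℕ} (c : Fin n) (g : Fin n → k) :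
    (∑ j : Fin n, g j * (if (j : ℕ) + (c : ℕ) + 1 = n then (-1 : k) ^ (c : ℕ) else 0))
      = g ⟨n - 1 - (c : ℕ), by omega⟩ * (-1 : k) ^ (c : ℕ) := by
  have hc := c.isLt
  rw [Finset.sum_eq_single (⟨n - 1 - (c : ℕ), by omega⟩ : Fin n)]
  · simp [show (n - 1 - (c : ℕ)) + (c : ℕ) + 1 = n from by omega]
  · intro b _ hb
    have : ¬((b : ℕ) + (c : ℕ) + 1 = n) := by
      intro h; exact hb (Fin.ext (by simp; omega))
    simp [this]
  · intro h; exact absurd (Finset.mem_univ _) h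

/-- Let `k` be a field of characteristic `≠ 2`, `n ≥ 1`, and let
`A = (1/2)I + N` with `N` the standard `n×n` nilpotent Jordan matrix.  Let `M` be the
anti-diagonal matrix with `M_{ij} = (−1)^{j+1}` when `i + j = n + 1` (1-indexed; in the
0-indexed formalization this reads `M_{ij} = (−1)^{j}` when `i + j + 1 = n`) and `0`
otherwise.  Then `M` is invertible, `M A M⁻¹ = (I − A)ᵗ`, and `Mᵗ = (−1)^{n+1} M`;
in particular `M` is skew-symmetric when `n` is even and symmetric when `n` is odd. -/
theorem explicit_compatible_form_matrix_for_jordan_block_half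
    {k : Type*} [Field k] (h2 : (2 : k) ≠ 0) {n : ℕ} (hn : 0 < n)
    (N : Matrix (Fin n) (Fin n) k)
    (hN : N = Matrix.of fun i j : Fin n => if (i : ℕ) + 1 = (j : ℕ) then (1 : k) else 0)
    (A : Matrix (Fin n) (Fin n) k)
    (hA : A = (2 : k)⁻¹ • (1 : Matrix (Fin n) (Fin n) k) + N)
    (M : Matrix (Fin n) (Fin n) k)
    (hM : M = Matrix.of fun i j : Fin n =>
      if (i : ℕ) + (j : ℕ) + 1 = n then (-1 : k) ^ (j : ℕ) else 0) :
    IsUnit M.det ∧ M * A * M⁻¹ = (1 - A)ᵀ ∧ Mᵀ = ((-1 : k) ^ (n + 1)) • M := by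
  -- M * ((-1)^(n-1) • M) = 1
  have hMM : M * ((-1 : k) ^ (n - 1) • M) = 1 := by
    ext i c
    have hi := i.isLt
    rw [Matrix.mul_apply]
    subst hM
    simp only [Matrix.smul_apply, Matrix.of_apply, smul_eq_mul]
    rw [show (∑ j : Fin n,
        (if (i : ℕ) + (j : ℕ) + 1 = n then (-1 : k) ^ (j : ℕ) else 0) *
          ((-1 : k) ^ (n - 1) *
            (if (j : ℕ) + (c : ℕ) + 1 = n then (-1 : k) ^ (c : ℕ) else 0))) =
        (-1 : k) ^ (n - 1 - (i : ℕ)) *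
          ((-1 : k) ^ (n - 1) *
            (if (n - 1 - (i : ℕ)) + (c : ℕ) + 1 = n then (-1 : k) ^ (c : ℕ) else 0))
      from sum_left i _]
    by_cases heq : i = c
    · subst heq
      simp only [show (n - 1 - (i : ℕ)) + (i : ℕ) + 1 = n from by omega, if_pos rfl, if_true,
        Matrix.one_apply_eq]
      rw [← mul_assoc, ← pow_add, ← pow_add]
      rw [negpow_congr (k := k) (a := n - 1 - (i : ℕ) + (n - 1) + (i : ℕ)) (b := 0) (by omega)]
      simp
    · have hc := c.isLt
      have h1 : ¬((n - 1 - (i : ℕ)) + (c : ℕ) + 1 = n) := by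
        intro h; exact heq (Fin.ext (by omega))
      rw [if_neg h1, Matrix.one_apply_ne heq]
      ring
  have hdet : IsUnit M.det := Matrix.isUnit_det_of_right_inverse hMM
  have hinv : M⁻¹ = (-1 : k) ^ (n - 1) • M := Matrix.inv_eq_right_inv hMM
  -- key relation M * A = (1 - A)ᵀ * M
  have hkey : M * A = (1 - A)ᵀ * M := by
    have hhalf : (1 : k) - (2 : k)⁻¹ = (2 : k)⁻¹ := by field_simp; ring
    ext i c
    have hi := i.isLt
    have hc := c.isLt
    rw [Matrix.mul_apply, Matrix.mul_apply]
    subst hM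
    simp only [Matrix.of_apply, Matrix.transpose_apply]
    rw [sum_left i (fun j => A j c), sum_right c (fun j => (1 - A) j i)]
    subst hA hN
    simp only [Matrix.sub_apply, Matrix.add_apply, Matrix.smul_apply, Matrix.of_apply,
      Matrix.one_apply, smul_eq_mul, Fin.ext_iff]
    by_cases h1 : n - 1 - (i : ℕ) = (c : ℕ)
    · have h1' : n - 1 - (c : ℕ) = (i : ℕ) := by omega
      rw [if_pos h1, if_pos h1', if_neg (by omega), if_neg (by omega), h1]
      linear_combination (-(-1 : k) ^ (c : ℕ)) * hhalf
    · by_cases hb : n - 1 - (i : ℕ) + 1 = (c : ℕ)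
      · have hi1 : 1 ≤ (i : ℕ) := by omega
        rw [if_neg h1, if_pos hb, if_neg (by omega), if_pos (by omega)]
        rw [show (c : ℕ) = (n - 1 - (i : ℕ)) + 1 from by omega, pow_succ]
        ring
      · rw [if_neg h1, if_neg hb, if_neg (by omega), if_neg (by omega)]
        ring
  refine ⟨hdet, ?_, ?_⟩
  · rw [hkey, mul_assoc, Matrix.mul_nonsing_inv M hdet, mul_one]
  · ext i j
    have hi := i.isLt
    have hj := j.isLt
    subst hM
    simp only [Matrix.transpose_apply, Matrix.smul_apply, Matrix.of_apply, smul_eq_mul]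
    by_cases h : (i : ℕ) + (j : ℕ) + 1 = n
    · rw [if_pos (by omega : (j : ℕ) + (i : ℕ) + 1 = n), if_pos h, ← pow_add]
      exact negpow_congr (by omega)
    · rw [if_neg (by omega : ¬((j : ℕ) + (i : ℕ) + 1 = n)), if_neg h, mul_zero]
end

section
/- Let k be a perfect field of characteristic ≠ 2 and let A be an n×n matrix over k whose minimal polynomial equals its characteristic polynomial and equals q(x)^m for a monic irreducible polynomial q of degree ≥ 2 (so A is an indecomposable endomorphism with no eigenvalue in k). The following are equivalent: (1) A is similar to (I − A)ᵗ; (2) there exists an invertible symmetric matrix T over k with T A T⁻¹ = (I − A)ᵗ; (3) there exists an invertible skew-symmetric matrix T over k with T A T⁻¹ = (I − A)ᵗ. -/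
open Matrix Polynomial

section Aux

variable {k : Type*} [Field k] {n : ℕ}

private lemma pow_mapQ {M : Type*} [AddCommGroup M] [Module k M]
    (W : Submodule k M) (f : M →ₗ[k] M) (hf : W ≤ W.comap f) (i : ℕ) (v : M) :
    ((W.mapQ W f hf) ^ i) (W.mkQ v) = W.mkQ ((f ^ i) v) := by
  induction i generalizing v with
  | zero => simp
  | succ i ih =>
      rw [pow_succ', pow_succ', Module.End.mul_apply, Module.End.mul_apply, ih]
      rfl

private lemma aeval_mapQ {M : Type*} [AddCommGroup M] [Module k M]
    (W : Submodule k M) (f : M →ₗ[k] M) (hf : W ≤ W.comap f) (p : k[X]) (v : M) :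
    (aeval (W.mapQ W f hf) p) (W.mkQ v) = W.mkQ ((aeval f p) v) := by
  induction p using Polynomial.induction_on' with
  | add p r hp hr =>
      rw [map_add, map_add, LinearMap.add_apply, LinearMap.add_apply, hp, hr, map_add]
  | monomial i a =>
      rw [aeval_monomial, aeval_monomial, Module.End.mul_apply, Module.End.mul_apply,
        Module.algebraMap_end_apply, Module.algebraMap_end_apply, pow_mapQ,
        Submodule.mkQ_apply, Submodule.mkQ_apply, ← Submodule.Quotient.mk_smul]

/-- Key invariant-subspace lemma: any nonzero `A`-invariant subspace contains the
range of `q(A)^(m-1)`. -/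
private lemma mem_invariant (A : Matrix (Fin n) (Fin n) k) (q : k[X]) (m : ℕ)
    (hq : Irreducible q)
    (hmin : minpoly k A = q ^ m) (hchar : Matrix.charpoly A = q ^ m)
    (W : Submodule k (Fin n → k)) (hW : W ≠ ⊥)
    (hWA : ∀ v ∈ W, A.mulVec v ∈ W) (v : Fin n → k) :
    (aeval A (q ^ (m - 1))).mulVec v ∈ W := by
  classical
  set f : (Fin n → k) →ₗ[k] (Fin n → k) := Matrix.toLinAlgEquiv' A with hfdef
  have hf : W ≤ W.comap f := by
    intro w hw
    simpa [hfdef, Matrix.toLinAlgEquiv'_apply] using hWA w hw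
  set g := W.mapQ W f hf with hgdef
  have haef : ∀ p : k[X], aeval f p = Matrix.toLinAlgEquiv' (aeval A p) := by
    intro p
    exact aeval_algHom_apply (Matrix.toLinAlgEquiv' (R := k) (n := Fin n)) A p
  have hg0 : aeval g (q ^ m) = 0 := by
    apply LinearMap.ext
    intro x
    obtain ⟨w, rfl⟩ := W.mkQ_surjective x
    rw [aeval_mapQ, haef, ← hmin, minpoly.aeval]
    simp
  have hdvd : minpoly k g ∣ q ^ m := minpoly.dvd k g hg0
  haveI : Nontrivial W := Submodule.nontrivial_iff_ne_bot.mpr hW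
  have hWpos : 0 < Module.finrank k W := Module.finrank_pos
  have hrank : Module.finrank k ((Fin n → k) ⧸ W) + Module.finrank k W = n := by
    rw [Submodule.finrank_quotient_add_finrank, Module.finrank_fin_fun]
  have hn : (q ^ m).natDegree = n := by
    rw [← hchar, Matrix.charpoly_natDegree_eq_dim, Fintype.card_fin]
  have hq0 : q ≠ 0 := hq.ne_zero
  have hqm0 : (q ^ m) ≠ 0 := pow_ne_zero _ hq0
  have hgd : (minpoly k g).natDegree < (q ^ m).natDegree := by
    have h1 : (minpoly k g).natDegree ≤ (LinearMap.charpoly g).natDegree :=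
      Polynomial.natDegree_le_of_dvd (LinearMap.minpoly_dvd_charpoly g)
        (LinearMap.charpoly_monic g).ne_zero
    have h2 : (LinearMap.charpoly g).natDegree = Module.finrank k ((Fin n → k) ⧸ W) :=
      LinearMap.charpoly_natDegree g
    omega
  obtain ⟨i, him, hassoc⟩ := (dvd_prime_pow hq.prime m).mp hdvd
  have hmz : minpoly k g ≠ 0 := by
    intro h0
    rw [h0] at hassoc
    exact pow_ne_zero i hq0 ((associated_zero_iff_eq_zero _).mp hassoc.symm)
  have him' : i ≠ m := by
    rintro rfl
    have e1 : (minpoly k g).natDegree ≤ (q ^ i).natDegree :=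
      Polynomial.natDegree_le_of_dvd hassoc.dvd (pow_ne_zero _ hq0)
    have e2 : (q ^ i).natDegree ≤ (minpoly k g).natDegree :=
      Polynomial.natDegree_le_of_dvd hassoc.symm.dvd hmz
    omega
  have hdvd' : minpoly k g ∣ q ^ (m - 1) :=
    dvd_trans hassoc.dvd (pow_dvd_pow q (by omega))
  obtain ⟨r, hr⟩ := hdvd'
  have hg1 : aeval g (q ^ (m - 1)) = 0 := by
    rw [hr, _root_.map_mul, minpoly.aeval, zero_mul]
  have := aeval_mapQ W f hf (q ^ (m - 1)) v
  rw [hg1] at this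
  have h0 : W.mkQ ((aeval f (q ^ (m - 1))) v) = 0 := by
    rw [← this]; simp
  rw [Submodule.mkQ_apply, Submodule.Quotient.mk_eq_zero] at h0
  rw [haef, Matrix.toLinAlgEquiv'_apply] at h0
  exact h0

/-- If `c` commutes with `A`, then `1 + c` or `1 - c` is invertible. -/
private lemma unit_one_add_or_sub (h2 : (2 : k) ≠ 0)
    (A : Matrix (Fin n) (Fin n) k) (q : k[X]) (m : ℕ)
    (hq : Irreducible q)
    (hmin : minpoly k A = q ^ m) (hchar : Matrix.charpoly A = q ^ m)
    (c : Matrix (Fin n) (Fin n) k) (hc : c * A = A * c) :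
    IsUnit (1 + c).det ∨ IsUnit (1 - c).det := by
  classical
  by_contra hcon
  push_neg at hcon
  obtain ⟨hp, hm'⟩ := hcon
  rw [isUnit_iff_ne_zero, not_not] at hp hm'
  obtain ⟨vp, hvpne, hvp⟩ := Matrix.exists_mulVec_eq_zero_iff.mpr hp
  obtain ⟨vm, hvmne, hvm⟩ := Matrix.exists_mulVec_eq_zero_iff.mpr hm'
  -- n ≥ 1 hence m ≥ 1
  have hn : (q ^ m).natDegree = n := by
    rw [← hchar, Matrix.charpoly_natDegree_eq_dim, Fintype.card_fin]
  have hnpos : 0 < n := by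
    rcases Nat.eq_zero_or_pos n with rfl | h
    · exact absurd (Subsingleton.elim vp 0) hvpne
    · exact h
  have hm1 : 1 ≤ m := by
    rcases Nat.eq_zero_or_pos m with rfl | h
    · rw [pow_zero, natDegree_one] at hn; omega
    · exact h
  -- q(A)^(m-1) ≠ 0
  have hB : aeval A (q ^ (m - 1)) ≠ 0 := by
    intro h0
    have hd := minpoly.dvd k A h0
    rw [hmin] at hd
    have := (pow_dvd_pow_iff hq.ne_zero hq.not_isUnit).mp hd
    omega
  have hex : ∃ v, (aeval A (q ^ (m - 1))).mulVec v ≠ 0 := by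
    by_contra hall
    push_neg at hall
    apply hB
    apply Matrix.toLinAlgEquiv'.injective
    rw [map_zero]
    apply LinearMap.ext
    intro v'
    simp only [LinearMap.zero_apply, Matrix.toLinAlgEquiv'_apply]
    exact hall v'
  obtain ⟨v, hv⟩ := hex
  -- the two kernels, as invariant subspaces
  have comm : ∀ d : Matrix (Fin n) (Fin n) k, d * A = A * d →
      ∀ w, d.mulVec w = 0 → d.mulVec (A.mulVec w) = 0 := by
    intro d hd w hw
    rw [Matrix.mulVec_mulVec, hd, ← Matrix.mulVec_mulVec, hw, Matrix.mulVec_zero]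
  have hcp : (1 + c) * A = A * (1 + c) := by
    rw [add_mul, mul_add, one_mul, mul_one, hc]
  have hcm : (1 - c) * A = A * (1 - c) := by
    rw [sub_mul, mul_sub, one_mul, mul_one, hc]
  set Wp : Submodule k (Fin n → k) := LinearMap.ker (Matrix.toLinAlgEquiv' (1 + c)) with hWp
  set Wm : Submodule k (Fin n → k) := LinearMap.ker (Matrix.toLinAlgEquiv' (1 - c)) with hWm
  have memWp : ∀ w, w ∈ Wp ↔ (1 + c).mulVec w = 0 := by
    intro w; simp only [hWp, LinearMap.mem_ker, Matrix.toLinAlgEquiv'_apply]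
  have memWm : ∀ w, w ∈ Wm ↔ (1 - c).mulVec w = 0 := by
    intro w; simp only [hWm, LinearMap.mem_ker, Matrix.toLinAlgEquiv'_apply]
  have hWpne : Wp ≠ ⊥ := by
    apply Submodule.ne_bot_iff _ |>.mpr
    exact ⟨vp, (memWp vp).mpr hvp, hvpne⟩
  have hWmne : Wm ≠ ⊥ := by
    apply Submodule.ne_bot_iff _ |>.mpr
    exact ⟨vm, (memWm vm).mpr hvm, hvmne⟩
  have hWpA : ∀ w ∈ Wp, A.mulVec w ∈ Wp := by
    intro w hw
    exact (memWp _).mpr (comm _ hcp w ((memWp w).mp hw))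
  have hWmA : ∀ w ∈ Wm, A.mulVec w ∈ Wm := by
    intro w hw
    exact (memWm _).mpr (comm _ hcm w ((memWm w).mp hw))
  set w := (aeval A (q ^ (m - 1))).mulVec v with hwdef
  have hwp : (1 + c).mulVec w = 0 :=
    (memWp w).mp (mem_invariant A q m hq hmin hchar Wp hWpne hWpA v)
  have hwm : (1 - c).mulVec w = 0 :=
    (memWm w).mp (mem_invariant A q m hq hmin hchar Wm hWmne hWmA v)
  have hsum : w + w = 0 := by
    have e1 := hwp
    rw [Matrix.add_mulVec, Matrix.one_mulVec] at e1
    have e2 := hwm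
    rw [Matrix.sub_mulVec, Matrix.one_mulVec] at e2
    have e3 : (w + c *ᵥ w) + (w - c *ᵥ w) = 0 := by rw [e1, e2, add_zero]
    rw [← e3]; abel
  have : (2 : k) • w = 0 := by
    rw [two_smul]; exact hsum
  rcases smul_eq_zero.mp this with h | h
  · exact h2 h
  · exact hv h

/-- `A - (1/2)•1` is invertible since `q` has no root in `k`. -/
private lemma unit_half (h2 : (2 : k) ≠ 0) (A : Matrix (Fin n) (Fin n) k)
    (q : k[X]) (m : ℕ) (hq : Irreducible q) (hdeg : 2 ≤ q.natDegree)
    (hmin : minpoly k A = q ^ m) :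
    IsUnit (A - (2⁻¹ : k) • 1).det := by
  classical
  rw [isUnit_iff_ne_zero]
  intro h0
  obtain ⟨v, hvne, hv⟩ := Matrix.exists_mulVec_eq_zero_iff.mpr h0
  have hAv : A.mulVec v = (2⁻¹ : k) • v := by
    rw [Matrix.sub_mulVec, sub_eq_zero] at hv
    rw [hv, Matrix.smul_mulVec, Matrix.one_mulVec]
  have hpow : ∀ j : ℕ, (A ^ j).mulVec v = ((2⁻¹ : k) ^ j) • v := by
    intro j
    induction j with
    | zero => simp
    | succ j ih =>
        rw [pow_succ', ← Matrix.mulVec_mulVec, ih, Matrix.mulVec_smul, hAv,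
          smul_smul, pow_succ', mul_comm]
  have key : ∀ p : k[X], (aeval A p).mulVec v = p.eval (2⁻¹ : k) • v := by
    intro p
    induction p using Polynomial.induction_on' with
    | add p r hp hr => rw [map_add, Matrix.add_mulVec, hp, hr, eval_add, add_smul]
    | monomial i a =>
        rw [aeval_monomial, eval_monomial, Algebra.algebraMap_eq_smul_one,
          smul_mul_assoc, one_mul, Matrix.smul_mulVec, hpow, smul_smul]
  have hq0 : q.eval (2⁻¹ : k) ≠ 0 := by
    intro hroot
    have hdvd : (X - C (2⁻¹ : k)) ∣ q := dvd_iff_isRoot.mpr hroot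
    obtain ⟨h, hh⟩ := hdvd
    have hXne : (X - C (2⁻¹ : k)) ≠ 0 := X_sub_C_ne_zero _
    rcases hq.isUnit_or_isUnit hh with hu | hu
    · have h1 := natDegree_eq_of_degree_eq_some (degree_eq_zero_of_isUnit hu)
      rw [natDegree_X_sub_C] at h1
      exact one_ne_zero h1
    · have hh0 : h ≠ 0 := fun h0 => by simp [h0] at hu
      have hd := natDegree_eq_of_degree_eq_some (degree_eq_zero_of_isUnit hu)
      have : q.natDegree = 1 := by
        rw [hh, natDegree_mul hXne hh0, natDegree_X_sub_C, hd]
        rfl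
      omega
  have h0' := key (q ^ m)
  rw [eval_pow, ← hmin, minpoly.aeval, Matrix.zero_mulVec] at h0'
  rcases smul_eq_zero.mp h0'.symm with h | h
  · exact pow_ne_zero m hq0 h
  · exact hvne h

end Aux

/-- Let `k` be a perfect field of characteristic `≠ 2` and `A` an
`n×n` matrix over `k` whose minimal polynomial equals its characteristic polynomial and
equals `q^m` for a monic irreducible `q` of degree `≥ 2` (an indecomposable
endomorphism with no eigenvalue in `k`).  TFAE: (1) `A` is similar to `(I − A)ᵗ`;
(2) there is an invertible symmetric `T` with `T A T⁻¹ = (I − A)ᵗ`; (3) there is an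
invertible skew-symmetric `T` with `T A T⁻¹ = (I − A)ᵗ`. -/
theorem selfdual_iff_symmetric_iff_skew_no_eigenvalue
    {k : Type*} [Field k] [PerfectField k] (h2 : (2 : k) ≠ 0)
    {n : ℕ} (A : Matrix (Fin n) (Fin n) k)
    (q : Polynomial k) (m : ℕ) (hq : Irreducible q) (hqm : q.Monic)
    (hdeg : 2 ≤ q.natDegree)
    (hmin : minpoly k A = q ^ m) (hchar : Matrix.charpoly A = q ^ m) :
    List.TFAE
      [ (∃ S : Matrix (Fin n) (Fin n) k, IsUnit S.det ∧ S * A * S⁻¹ = (1 - A)ᵀ),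
        (∃ T : Matrix (Fin n) (Fin n) k, IsUnit T.det ∧ Tᵀ = T ∧
          T * A * T⁻¹ = (1 - A)ᵀ),
        (∃ T : Matrix (Fin n) (Fin n) k, IsUnit T.det ∧ Tᵀ = -T ∧
          T * A * T⁻¹ = (1 - A)ᵀ) ] := by
  classical
  set u : Matrix (Fin n) (Fin n) k := A - (2⁻¹ : k) • 1 with hu
  have hudet : IsUnit u.det := unit_half h2 A q m hq hdeg hmin
  have huA : u * A = A * u := by
    rw [hu, Matrix.sub_mul, Matrix.mul_sub, smul_mul_assoc, one_mul, mul_smul_comm, mul_one]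
  have hut : uᵀ = Aᵀ - (2⁻¹ : k) • 1 := by
    rw [hu, transpose_sub, transpose_smul, transpose_one]
  -- conjugation form ↔ product form
  have conj_of_prod : ∀ T : Matrix (Fin n) (Fin n) k, IsUnit T.det →
      T * A = (1 - A)ᵀ * T → T * A * T⁻¹ = (1 - A)ᵀ := by
    intro T hT h
    rw [h, Matrix.mul_assoc, Matrix.mul_nonsing_inv T hT, Matrix.mul_one]
  have prod_of_conj : ∀ T : Matrix (Fin n) (Fin n) k, IsUnit T.det →
      T * A * T⁻¹ = (1 - A)ᵀ → T * A = (1 - A)ᵀ * T := by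
    intro T hT h
    rw [← h, Matrix.mul_assoc, Matrix.nonsing_inv_mul T hT, Matrix.mul_one]
  -- the half-twist identity
  have twist : ∀ T : Matrix (Fin n) (Fin n) k, T * A = (1 - A)ᵀ * T →
      (Aᵀ - (2⁻¹ : k) • 1) * T = -(T * u) := by
    intro T h
    have hAtT : Aᵀ * T = T - T * A := by
      rw [h, transpose_sub, transpose_one, Matrix.sub_mul, Matrix.one_mul,
        sub_sub_cancel]
    rw [hu, Matrix.sub_mul, Matrix.mul_sub, hAtT, smul_mul_assoc, one_mul,
      mul_smul_comm, mul_one, neg_sub]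
    have : T - (2⁻¹ : k) • T = (2⁻¹ : k) • T := by
      rw [sub_eq_iff_eq_add, ← add_smul]
      have : (2⁻¹ : k) + 2⁻¹ = 1 := by
        rw [← two_mul, mul_inv_cancel₀ h2]
      rw [this, one_smul]
    calc T - T * A - (2⁻¹ : k) • T
        = T - (2⁻¹ : k) • T - T * A := by abel
      _ = (2⁻¹ : k) • T - T * A := by rw [this]
  -- transposes of intertwiners are intertwiners
  have trans_int : ∀ T : Matrix (Fin n) (Fin n) k, T * A = (1 - A)ᵀ * T →
      Tᵀ * A = (1 - A)ᵀ * Tᵀ := by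
    intro T h
    have e : Aᵀ * Tᵀ = Tᵀ * (1 - A) := by
      have h' := congrArg Matrix.transpose h
      rw [transpose_mul, transpose_mul, transpose_transpose] at h'
      exact h'
    rw [transpose_sub, transpose_one, Matrix.sub_mul, Matrix.one_mul, e,
      Matrix.mul_sub, Matrix.mul_one, sub_sub_cancel]
  -- the half-twist of an intertwiner
  have twist_full : ∀ T : Matrix (Fin n) (Fin n) k, IsUnit T.det →
      T * A = (1 - A)ᵀ * T →
      IsUnit (T * u).det ∧ (T * u) * A = (1 - A)ᵀ * (T * u) ∧
        (T * u)ᵀ = -(Tᵀ * u) := by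
    intro T hT h
    refine ⟨?_, ?_, ?_⟩
    · rw [Matrix.det_mul]; exact hT.mul hudet
    · rw [Matrix.mul_assoc, huA, ← Matrix.mul_assoc, h, Matrix.mul_assoc]
    · rw [transpose_mul, hut, twist Tᵀ (trans_int T h)]
  tfae_have 1 → 2
  | ⟨S, hS, hSA⟩ => by
    have hS' : S * A = (1 - A)ᵀ * S := prod_of_conj S hS hSA
    have hST : Sᵀ * A = (1 - A)ᵀ * Sᵀ := trans_int S hS'
    have hAS : A * S⁻¹ = S⁻¹ * (1 - A)ᵀ := by
      rw [← hSA, ← Matrix.mul_assoc, ← Matrix.mul_assoc, Matrix.nonsing_inv_mul S hS,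
        Matrix.one_mul]
    have hc : (S⁻¹ * Sᵀ) * A = A * (S⁻¹ * Sᵀ) := by
      calc (S⁻¹ * Sᵀ) * A = S⁻¹ * (Sᵀ * A) := by rw [Matrix.mul_assoc]
        _ = S⁻¹ * ((1 - A)ᵀ * Sᵀ) := by rw [hST]
        _ = (S⁻¹ * (1 - A)ᵀ) * Sᵀ := by rw [Matrix.mul_assoc]
        _ = (A * S⁻¹) * Sᵀ := by rw [hAS]
        _ = A * (S⁻¹ * Sᵀ) := by rw [Matrix.mul_assoc]
    have hplus : S * (1 + S⁻¹ * Sᵀ) = S + Sᵀ := by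
      rw [Matrix.mul_add, Matrix.mul_one, ← Matrix.mul_assoc,
        Matrix.mul_nonsing_inv S hS, Matrix.one_mul]
    have hminus : S * (1 - S⁻¹ * Sᵀ) = S - Sᵀ := by
      rw [Matrix.mul_sub, Matrix.mul_one, ← Matrix.mul_assoc,
        Matrix.mul_nonsing_inv S hS, Matrix.one_mul]
    have hint_plus : (S + Sᵀ) * A = (1 - A)ᵀ * (S + Sᵀ) := by
      rw [Matrix.add_mul, Matrix.mul_add, hS', hST]
    have hint_minus : (S - Sᵀ) * A = (1 - A)ᵀ * (S - Sᵀ) := by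
      rw [Matrix.sub_mul, Matrix.mul_sub, hS', hST]
    rcases unit_one_add_or_sub h2 A q m hq hmin hchar (S⁻¹ * Sᵀ) hc with hunit | hunit
    · refine ⟨S + Sᵀ, ?_, ?_, conj_of_prod _ ?_ hint_plus⟩
      · rw [← hplus, Matrix.det_mul]; exact hS.mul hunit
      · rw [transpose_add, transpose_transpose, add_comm]
      · rw [← hplus, Matrix.det_mul]; exact hS.mul hunit
    · have hdet0 : IsUnit (S - Sᵀ).det := by
        rw [← hminus, Matrix.det_mul]; exact hS.mul hunit
      obtain ⟨hdet, hint, htr⟩ := twist_full (S - Sᵀ) hdet0 hint_minus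
      refine ⟨(S - Sᵀ) * u, hdet, ?_, conj_of_prod _ hdet hint⟩
      rw [htr, transpose_sub, transpose_transpose, ← neg_sub S Sᵀ, Matrix.neg_mul, neg_neg]
  tfae_have 2 → 3
  | ⟨T, hT, hsym, hconj⟩ => by
    have h := prod_of_conj T hT hconj
    obtain ⟨hdet, hint, htr⟩ := twist_full T hT h
    refine ⟨T * u, hdet, ?_, conj_of_prod _ hdet hint⟩
    rw [htr, hsym]
  tfae_have 3 → 1
  | ⟨T, hT, _, hconj⟩ => ⟨T, hT, hconj⟩
  tfae_finish
end

section
/- Let k be a field of characteristic ≠ 2 and m ≥ 0 an integer. Let n = 3m + 1 and let V = kⁿ with basis e₁, …, e_{m+1}, f₁, …, f_m, g₁, …, g_m. Define the sextuple of type A(3m+1, 0): I₁ = span{eᵢ − fᵢ : 1 ≤ i ≤ m}, I₂ = span{g₁, …, g_m}, I₃ = span{fᵢ − gᵢ : 1 ≤ i ≤ m}, C₁ = span{e₁, …, e_{m+1}, f₁, …, f_m}, C₂ = span{e₁, …, e_{m+1}, g₁, …, g_m}, C₃ = span{e₁, e₂ − f₁, …, e_{m+1} − f_m, f₁ − g₁,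 …, f_m − g_m}. Then there exists a nondegenerate bilinear form B on V with B(y, x) = (−1)^m B(x, y) for all x, y ∈ V, such that for each i ∈ {1, 2, 3} the B-orthogonal {v ∈ V : B(v, w) = 0 for all w ∈ Iᵢ} equals Cᵢ. In particular, for m odd this sextuple admits a compatible symplectic form, and for m even a compatible symmetric form. -/
open Submodule

section A3mPlus1

variable (k : Type*) [Field k] (m : ℕ)

/-- The ambient space of the standard-basis normal form of `A(3m+1, 0)`:
`k^{m+1} × k^m × k^m` with basis `e₁, …, e_{m+1}, f₁, …, f_m, g₁, …, g_m`. -/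
abbrev AmbA (k : Type*) [Field k] (m : ℕ) :=
  (Fin (m + 1) → k) × (Fin m → k) × (Fin m → k)

/-- The basis vector `eᵢ`. -/
def ev (i : Fin (m + 1)) : AmbA k m := (Pi.single i 1, 0, 0)

/-- The basis vector `fᵢ`. -/
def fv (i : Fin m) : AmbA k m := (0, Pi.single i 1, 0)

/-- The basis vector `gᵢ`. -/
def gv (i : Fin m) : AmbA k m := (0, 0, Pi.single i 1)

/-- `I₁ = span{eᵢ − fᵢ : 1 ≤ i ≤ m}`. -/
def IA1 : Submodule k (AmbA k m) :=
  span k (Set.range fun i : Fin m => ev k m i.castSucc - fv k m i)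

/-- `I₂ = span{g₁, …, g_m}`. -/
def IA2 : Submodule k (AmbA k m) := span k (Set.range (gv k m))

/-- `I₃ = span{fᵢ − gᵢ : 1 ≤ i ≤ m}`. -/
def IA3 : Submodule k (AmbA k m) :=
  span k (Set.range fun i : Fin m => fv k m i - gv k m i)

/-- `C₁ = span{e₁, …, e_{m+1}, f₁, …, f_m}`. -/
def CA1 : Submodule k (AmbA k m) :=
  span k (Set.range (ev k m) ∪ Set.range (fv k m))

/-- `C₂ = span{e₁, …, e_{m+1}, g₁, …, g_m}`. -/
def CA2 : Submodule k (AmbA k m) :=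
  span k (Set.range (ev k m) ∪ Set.range (gv k m))

/-- `C₃ = span{e₁, e₂ − f₁, …, e_{m+1} − f_m, f₁ − g₁, …, f_m − g_m}`. -/
def CA3 : Submodule k (AmbA k m) :=
  span k (({ev k m 0} : Set (AmbA k m))
    ∪ (Set.range fun i : Fin m => ev k m i.succ - fv k m i)
    ∪ (Set.range fun i : Fin m => fv k m i - gv k m i))

end A3mPlus1

/-!
Write `v = (x, y, z)` and `ε = (-1)^m`. The subspaces `C₁`, `C₂`, `C₃` are cut out by the
coordinate vectors `z`, `y` and `s = y + z + (x₁, …, x_m)`, and `I₁`, `I₂`, `I₃` are spanned by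
`uⱼ = eⱼ - fⱼ`, `gⱼ` and `wⱼ = fⱼ - gⱼ`. So it suffices to find an `ε`-symmetric form with
`B(v, uⱼ) = (A z)ⱼ`, `B(v, gⱼ) = -ε (Aᵀ y)ⱼ` and `B(v, wⱼ) = -(A s)ⱼ` for an invertible
`m × m` matrix `A`; it is nondegenerate as soon as `B(e₀, e_m) ≠ 0`, because `C₁ ∩ C₂ ∩ C₃ = k e₀`.
Such a form is `Φ + ε Φᵀ` for an explicit `Φ` provided `A i j - A i (j - 1) = -ε A j i`,
i.e. `A (1 - S) = -ε Aᵀ` for the shift `S`. Writing `C(e, d)` for the coefficient of `tᵈ` in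
`(1 + t)ᵉ`, `e ∈ ℤ`, the matrices `A⁽ᶜ⁾ i j = (-1)ⁱ C(c + j + 1 - m, i + j + 1 - m)` satisfy
`A⁽ᶜ⁾ i j - A⁽ᶜ⁾ i (j - 1) = -ε A⁽ᵐ⁻¹⁻ᶜ⁾ j i` by Pascal's rule and upper negation, so
`A = A⁽⁰⁾ + A⁽ᵐ⁻¹⁾` works. It vanishes above the antidiagonal and is `±2` on it.
-/

open Matrix

namespace A3mPlus1

def intChoose (e : ℤ) : ℤ → ℤ
  | .ofNat d => Ring.choose e d
  | .negSucc _ => 0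

lemma intChoose_natCast (e : ℤ) (d : ℕ) : intChoose e d = Ring.choose e d := rfl

lemma intChoose_of_neg (e : ℤ) {d : ℤ} (hd : d < 0) : intChoose e d = 0 := by
  cases d with
  | ofNat d => exact absurd hd (by simp)
  | negSucc d => rfl

lemma intChoose_zero (e : ℤ) : intChoose e 0 = 1 := Ring.choose_zero_right e

lemma intChoose_succ (e d : ℤ) :
    intChoose (e + 1) d = intChoose e d + intChoose e (d - 1) := by
  obtain ⟨n, rfl | rfl⟩ := Int.eq_nat_or_neg d
  · cases n with
    | zero => simp [intChoose_zero, intChoose_of_neg]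
    | succ n =>
      rw [show ((n + 1 : ℕ) : ℤ) - 1 = n by omega, intChoose_natCast, intChoose_natCast,
        intChoose_natCast, Ring.choose_succ_succ, add_comm]
  · rcases n.eq_zero_or_pos with rfl | hn
    · simp [intChoose_zero, intChoose_of_neg]
    · rw [intChoose_of_neg _ (by omega), intChoose_of_neg _ (by omega),
        intChoose_of_neg _ (by omega), add_zero]

lemma intChoose_eq_negOnePow_smul (e d : ℤ) :
    intChoose e d = d.negOnePow • intChoose (d - 1 - e) d := by
  obtain ⟨n, rfl | rfl⟩ := Int.eq_nat_or_neg d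
  · rw [intChoose_natCast, intChoose_natCast, ← neg_neg e, Ring.choose_neg, neg_neg]
    congr 2
    ring
  · rcases n.eq_zero_or_pos with rfl | hn
    · simp [intChoose_zero]
    · rw [intChoose_of_neg _ (by omega), intChoose_of_neg _ (by omega), smul_zero]

lemma col_dotProduct {R n p : Type*} [NonUnitalNonAssocSemiring R] [Fintype n]
    (M : Matrix n p R) (l : p) (x : n → R) : M.col l ⬝ᵥ x = (Mᵀ *ᵥ x) l := rfl

lemma forall_mem_span_range_eq_zero_iff {k V ι : Type*} [Field k] [AddCommGroup V] [Module k V]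
    [Fintype ι] [DecidableEq ι] (B : LinearMap.BilinForm k V) (u : ι → V) (φ : V → ι → k)
    {c : k} (hc : c ≠ 0) {M : Matrix ι ι k} (hM : M.det ≠ 0)
    (hB : ∀ v i, B v (u i) = c * (M *ᵥ φ v) i) (v : V) :
    (∀ w ∈ span k (Set.range u), B v w = 0) ↔ φ v = 0 := by
  constructor
  · intro h
    refine eq_zero_of_mulVec_eq_zero hM (funext fun i => ?_)
    have hi := h _ (subset_span ⟨i, rfl⟩)
    rw [hB] at hi
    exact (mul_eq_zero.mp hi).resolve_left hc
  · intro h w hw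
    refine (span_le (p := LinearMap.ker (B v))).mpr ?_ hw
    rintro _ ⟨i, rfl⟩
    simp [hB, h]

section GramMatrix

def gramEntryPart (m : ℕ) (c i j : ℤ) : ℤ :=
  i.negOnePow • intChoose (c + j + 1 - m) (i + j + 1 - m)

lemma gramEntryPart_sub (m : ℕ) (c i j : ℤ) :
    gramEntryPart m c i j - gramEntryPart m c i (j - 1)
      = -((m : ℤ).negOnePow • gramEntryPart m (m - 1 - c) j i) := by
  have pascal : intChoose (c + j + 1 - m) (i + j + 1 - m)
      - intChoose (c + (j - 1) + 1 - m) (i + (j - 1) + 1 - m)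
      = intChoose (c + j - m) (i + j + 1 - m) := by
    rw [show c + j + 1 - m = c + j - m + 1 by ring, intChoose_succ,
      show c + (j - 1) + 1 - m = c + j - m by ring,
      show i + (j - 1) + 1 - m = i + j + 1 - m - 1 by ring]
    ring
  have negation : intChoose (c + j - m) (i + j + 1 - m)
      = (i + j + 1 - m).negOnePow • intChoose (m - 1 - c + i + 1 - m) (j + i + 1 - m) := by
    rw [intChoose_eq_negOnePow_smul]
    congr 2 <;> ring
  have sign : i.negOnePow * (i + j + 1 - m).negOnePow = -((m : ℤ).negOnePow * j.negOnePow) := by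
    rw [← Int.negOnePow_add, ← Int.negOnePow_add, ← Int.negOnePow_succ, Int.negOnePow_eq_iff]
    exact ⟨i - m, by ring⟩
  simp only [gramEntryPart, ← smul_sub, pascal, negation, smul_smul, sign, Units.neg_smul]

def gramEntry (m : ℕ) (i j : ℤ) : ℤ := gramEntryPart m 0 i j + gramEntryPart m (m - 1) i j

lemma gramEntry_sub (m : ℕ) (i j : ℤ) :
    gramEntry m i j - gramEntry m i (j - 1) = -((m : ℤ).negOnePow • gramEntry m j i) := by
  have h₀ := gramEntryPart_sub m 0 i j
  have h₁ := gramEntryPart_sub m (m - 1) i j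
  rw [sub_zero] at h₀
  rw [sub_self] at h₁
  rw [gramEntry, gramEntry, gramEntry, smul_add, neg_add]
  linear_combination h₀ + h₁

lemma gramEntry_eq_zero_of_lt {m : ℕ} {i j : ℤ} (h : i + j + 1 < m) :
    gramEntry m i j = 0 := by
  simp [gramEntry, gramEntryPart, intChoose_of_neg _ (sub_neg.mpr h)]

lemma gramEntry_antidiagonal {m : ℕ} {i j : ℤ} (h : i + j + 1 = m) :
    gramEntry m i j = i.negOnePow • 2 := by
  simp only [gramEntry, gramEntryPart, h, sub_self, intChoose_zero, ← smul_add]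
  rfl

variable {k : Type*} [Field k] {m : ℕ}

lemma gramEntry_cast_sub (i j : ℤ) :
    (gramEntry m i j : k) - gramEntry m i (j - 1) = -((-1) ^ m * gramEntry m j i) := by
  have h := congrArg (Int.cast : ℤ → k) (gramEntry_sub m i j)
  rwa [Units.smul_def, smul_eq_mul, Int.cast_sub, Int.cast_neg, Int.cast_mul,
    Int.cast_negOnePow_natCast] at h

lemma sum_gramEntry_mul_succ (j : ℤ) (hj : j < m) (x : Fin (m + 1) → k) :
    ∑ i : Fin m, (gramEntry m j i : k) * x i.succ
      = ∑ i : Fin (m + 1), (gramEntry m j (i - 1) : k) * x i := by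
  rw [Fin.sum_univ_succ, Fin.val_zero, Nat.cast_zero, zero_sub,
    gramEntry_eq_zero_of_lt (by omega), Int.cast_zero, zero_mul, zero_add]
  simp

variable (k m) in
def gramMatrix : Matrix (Fin m) (Fin m) k := Matrix.of fun i j => (gramEntry m i j : k)

lemma det_gramMatrix_ne_zero (h2 : (2 : k) ≠ 0) : (gramMatrix k m).det ≠ 0 := by
  have hrev (i : Fin m) : ((Fin.rev i : ℕ) : ℤ) = m - 1 - i := by rw [Fin.val_rev]; omega
  have htri : ((gramMatrix k m).submatrix Fin.revPerm id).IsUpperTriangular := by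
    intro i j (hji : j < i)
    simp only [submatrix_apply, Fin.revPerm_apply, id, gramMatrix, of_apply]
    rw [gramEntry_eq_zero_of_lt (by rw [hrev]; omega), Int.cast_zero]
  have hdet := det_permute Fin.revPerm (gramMatrix k m)
  rw [det_of_isUpperTriangular htri] at hdet
  refine fun h => (Finset.prod_ne_zero_iff.mpr fun i _ => ?_) (hdet.trans (by rw [h, mul_zero]))
  simp only [submatrix_apply, Fin.revPerm_apply, id, gramMatrix, of_apply]
  rw [gramEntry_antidiagonal (by rw [hrev]; omega), Units.smul_def]
  simp [h2]

end GramMatrix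

section Coordinates

variable (k : Type*) [Field k] (m : ℕ)

def xInit : AmbA k m →ₗ[k] Fin m → k :=
  LinearMap.funLeft k k Fin.castSucc ∘ₗ LinearMap.fst k _ _

def xTail : AmbA k m →ₗ[k] Fin m → k := LinearMap.funLeft k k Fin.succ ∘ₗ LinearMap.fst k _ _

def xLast : AmbA k m →ₗ[k] k := LinearMap.proj (Fin.last m) ∘ₗ LinearMap.fst k _ _

def yPart : AmbA k m →ₗ[k] Fin m → k := LinearMap.fst k _ _ ∘ₗ LinearMap.snd k _ _

def zPart : AmbA k m →ₗ[k] Fin m → k := LinearMap.snd k _ _ ∘ₗ LinearMap.snd k _ _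

def c3Eqns : AmbA k m →ₗ[k] Fin m → k := yPart k m + zPart k m + xTail k m

variable {k m}

lemma xInit_apply (v : AmbA k m) : xInit k m v = fun i => v.1 i.castSucc := rfl

lemma xLast_apply (v : AmbA k m) : xLast k m v = v.1 (Fin.last m) := rfl

lemma yPart_apply (v : AmbA k m) : yPart k m v = v.2.1 := rfl

lemma zPart_apply (v : AmbA k m) : zPart k m v = v.2.2 := rfl

lemma c3Eqns_apply (v : AmbA k m) : c3Eqns k m v = v.2.1 + v.2.2 + fun i => v.1 i.succ := rfl

lemma sum_smul_ev (c : Fin (m + 1) → k) : ∑ i, c i • ev k m i = (c, 0, 0) := by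
  ext : 2 <;> simp only [ev, Prod.fst_sum, Prod.snd_sum, Prod.smul_mk, smul_zero,
    Finset.sum_const_zero, ← pi_eq_sum_univ']

lemma sum_smul_fv (c : Fin m → k) : ∑ i, c i • fv k m i = (0, c, 0) := by
  ext : 2 <;> simp only [fv, Prod.fst_sum, Prod.snd_sum, Prod.smul_mk, smul_zero,
    Finset.sum_const_zero, ← pi_eq_sum_univ']

lemma sum_smul_gv (c : Fin m → k) : ∑ i, c i • gv k m i = (0, 0, c) := by
  ext : 2 <;> simp only [gv, Prod.fst_sum, Prod.snd_sum, Prod.smul_mk, smul_zero,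
    Finset.sum_const_zero, ← pi_eq_sum_univ']

lemma mem_CA1_iff (v : AmbA k m) : v ∈ CA1 k m ↔ zPart k m v = 0 := by
  constructor
  · intro hv
    refine (span_le (p := LinearMap.ker (zPart k m))).mpr ?_ hv
    rintro _ (⟨i, rfl⟩ | ⟨i, rfl⟩) <;> rfl
  · intro hz
    have hv : v = ∑ i, v.1 i • ev k m i + ∑ i, v.2.1 i • fv k m i := by
      rw [sum_smul_ev, sum_smul_fv]
      ext : 2 <;> simp [← hz, zPart_apply]
    rw [hv]
    exact add_mem (sum_mem fun i _ => smul_mem _ _ (subset_span (Or.inl ⟨i, rfl⟩)))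
      (sum_mem fun i _ => smul_mem _ _ (subset_span (Or.inr ⟨i, rfl⟩)))

lemma mem_CA2_iff (v : AmbA k m) : v ∈ CA2 k m ↔ yPart k m v = 0 := by
  constructor
  · intro hv
    refine (span_le (p := LinearMap.ker (yPart k m))).mpr ?_ hv
    rintro _ (⟨i, rfl⟩ | ⟨i, rfl⟩) <;> rfl
  · intro hy
    have hv : v = ∑ i, v.1 i • ev k m i + ∑ i, v.2.2 i • gv k m i := by
      rw [sum_smul_ev, sum_smul_gv]
      ext : 2 <;> simp [← hy, yPart_apply]
    rw [hv]
    exact add_mem (sum_mem fun i _ => smul_mem _ _ (subset_span (Or.inl ⟨i, rfl⟩)))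
      (sum_mem fun i _ => smul_mem _ _ (subset_span (Or.inr ⟨i, rfl⟩)))

lemma mem_CA3_iff (v : AmbA k m) : v ∈ CA3 k m ↔ c3Eqns k m v = 0 := by
  constructor
  · intro hv
    refine (span_le (p := LinearMap.ker (c3Eqns k m))).mpr ?_ hv
    rintro _ ((rfl | ⟨i, rfl⟩) | ⟨i, rfl⟩) <;> funext j <;>
      simp [c3Eqns_apply, ev, fv, gv, Pi.single_apply]
  · intro hs
    have hz (i : Fin m) : v.2.2 i = -(v.2.1 i + v.1 i.succ) := by
      have hi := congrFun hs i
      simp only [c3Eqns_apply, Pi.add_apply, Pi.zero_apply] at hi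
      linear_combination hi
    have hv : v = v.1 0 • ev k m 0 + ∑ i, v.1 i.succ • (ev k m i.succ - fv k m i)
        + ∑ i, (v.2.1 i + v.1 i.succ) • (fv k m i - gv k m i) := by
      simp only [smul_sub, Finset.sum_sub_distrib, sum_smul_fv, sum_smul_gv, add_sub_assoc',
        ← Fin.sum_univ_succ (f := fun i => v.1 i • ev k m i), sum_smul_ev]
      ext i <;> simp [hz]
    rw [hv]
    exact add_mem (add_mem (smul_mem _ _ (subset_span (Or.inl (Or.inl rfl))))
      (sum_mem fun i _ => smul_mem _ _ (subset_span (Or.inl (Or.inr ⟨i, rfl⟩)))))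
      (sum_mem fun i _ => smul_mem _ _ (subset_span (Or.inr ⟨i, rfl⟩)))

lemma eq_smul_ev_zero {v : AmbA k m} (hz : zPart k m v = 0) (hy : yPart k m v = 0)
    (hs : c3Eqns k m v = 0) : v = v.1 0 • ev k m 0 := by
  have hx (i : Fin m) : v.1 i.succ = 0 := by
    have hi := congrFun hs i
    simp only [c3Eqns_apply, Pi.add_apply, Pi.zero_apply, ← yPart_apply, ← zPart_apply, hy,
      hz] at hi
    simpa using hi
  ext j
  · cases j using Fin.cases <;> simp [ev, hx, Fin.succ_ne_zero]
  · simp [ev, ← yPart_apply, hy]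
  · simp [ev, ← zPart_apply, hz]

end Coordinates

section Form

variable (k : Type*) [Field k] (m : ℕ)

def dotProductForm (φ ψ : AmbA k m →ₗ[k] Fin m → k) : LinearMap.BilinForm k (AmbA k m) :=
  (dotProductBilin k k).compl₁₂ φ ψ

/-- `xInit` and `xInit + yPart` are the coordinates along `eⱼ - fⱼ` and `fⱼ - gⱼ` in the basis
`(eⱼ - fⱼ, gⱼ, fⱼ - gⱼ, e_m)`. -/
def halfForm : LinearMap.BilinForm k (AmbA k m) :=
  dotProductForm k m ((gramMatrix k m).mulVecLin ∘ₗ zPart k m) (xInit k m)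
  - dotProductForm k m ((gramMatrix k m).mulVecLin ∘ₗ c3Eqns k m) (xInit k m + yPart k m)
  + (-1 : k) ^ m •
    dotProductForm k m ((gramMatrix k m)ᵀ.mulVecLin ∘ₗ xInit k m) (xInit k m + yPart k m)

/-- The last summand only matters for `m = 0`, where `halfForm` vanishes. -/
def compatibleForm : LinearMap.BilinForm k (AmbA k m) :=
  halfForm k m + (-1 : k) ^ m • (halfForm k m).flip
  + (1 + (-1 : k) ^ m) • (LinearMap.mul k k).compl₁₂ (xLast k m) (xLast k m)

variable {k m}

lemma halfForm_apply (v w : AmbA k m) :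
    halfForm k m v w = (gramMatrix k m *ᵥ zPart k m v) ⬝ᵥ xInit k m w
      - (gramMatrix k m *ᵥ c3Eqns k m v) ⬝ᵥ (xInit k m w + yPart k m w)
      + (-1) ^ m * ((gramMatrix k m)ᵀ *ᵥ xInit k m v) ⬝ᵥ (xInit k m w + yPart k m w) := by
  simp only [halfForm, dotProductForm, LinearMap.add_apply, LinearMap.sub_apply,
    LinearMap.smul_apply, LinearMap.compl₁₂_apply, dotProductBilin_apply_apply,
    LinearMap.comp_apply, mulVecLin_apply, smul_eq_mul]

lemma compatibleForm_apply (v w : AmbA k m) :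
    compatibleForm k m v w = halfForm k m v w + (-1) ^ m * halfForm k m w v
      + (1 + (-1) ^ m) * (xLast k m v * xLast k m w) := by
  simp [compatibleForm]

lemma compatibleForm_symm (v w : AmbA k m) :
    compatibleForm k m w v = (-1) ^ m * compatibleForm k m v w := by
  have hsq : ((-1 : k) ^ m) ^ 2 = 1 := by rw [← pow_mul, mul_comm, pow_mul]; simp
  rw [compatibleForm_apply, compatibleForm_apply]
  linear_combination (-halfForm k m w v - xLast k m v * xLast k m w) * hsq

lemma compatibleForm_isRefl : LinearMap.IsRefl (compatibleForm k m) := fun v w h => by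
  rw [compatibleForm_symm, h, mul_zero]

lemma gramMatrix_mulVec_c3Eqns_ev_castSucc_sub_fv (l : Fin m) :
    gramMatrix k m *ᵥ c3Eqns k m (ev k m l.castSucc - fv k m l)
      = (-1 : k) ^ m • ((gramMatrix k m)ᵀ *ᵥ Pi.single l 1) := by
  have hc3 : c3Eqns k m (ev k m l.castSucc - fv k m l)
      = -Pi.single l 1 + fun i : Fin m => (Pi.single l.castSucc 1 : Fin (m + 1) → k) i.succ := by
    funext i; simp [c3Eqns_apply, ev, fv]
  funext j
  have hshift : (gramMatrix k m *ᵥ fun i : Fin m =>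
      (Pi.single l.castSucc 1 : Fin (m + 1) → k) i.succ) j = gramEntry m j (l - 1) := by
    simp only [mulVec, dotProduct, gramMatrix, of_apply]
    rw [sum_gramEntry_mul_succ _ (by omega)]
    simp [Pi.single_apply]
  rw [hc3, mulVec_add, mulVec_neg, mulVec_single_one, mulVec_single_one, Pi.add_apply, hshift]
  simp only [Pi.neg_apply, col_apply, Pi.smul_apply, gramMatrix, transpose_apply, of_apply,
    smul_eq_mul]
  linear_combination -gramEntry_cast_sub (k := k) (m := m) j l

lemma compatibleForm_apply_ev_castSucc_sub_fv (v : AmbA k m) (l : Fin m) :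
    compatibleForm k m v (ev k m l.castSucc - fv k m l)
      = (gramMatrix k m *ᵥ zPart k m v) l := by
  set u := ev k m l.castSucc - fv k m l
  have hz : zPart k m u = 0 := by funext i; simp [u, zPart_apply, ev, fv]
  have hx : xInit k m u = Pi.single l 1 := by
    funext i; simp [u, xInit_apply, ev, fv, Pi.single_apply]
  have hW : xInit k m u + yPart k m u = 0 := by
    funext i; simp [u, xInit_apply, yPart_apply, ev, fv, Pi.single_apply]
  have hX : xLast k m u = 0 := by simp [u, xLast_apply, ev, fv, Fin.castSucc_ne_last]
  rw [compatibleForm_apply, halfForm_apply, halfForm_apply, hz, hW, hx, hX,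
    gramMatrix_mulVec_c3Eqns_ev_castSucc_sub_fv, dotProduct_single_one]
  simp [smul_dotProduct]
  ring

lemma compatibleForm_apply_gv (v : AmbA k m) (l : Fin m) :
    compatibleForm k m v (gv k m l) = -(-1) ^ m * ((gramMatrix k m)ᵀ *ᵥ yPart k m v) l := by
  have hz : zPart k m (gv k m l) = Pi.single l 1 := rfl
  have hy : yPart k m (gv k m l) = 0 := rfl
  have hx : xInit k m (gv k m l) = 0 := rfl
  have hc3 : c3Eqns k m (gv k m l) = Pi.single l 1 := by funext i; simp [c3Eqns_apply, gv]
  have hX : xLast k m (gv k m l) = 0 := rfl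
  rw [compatibleForm_apply, halfForm_apply, halfForm_apply, hz, hy, hx, hc3, hX,
    mulVec_single_one]
  simp [dotProduct_add, col_dotProduct]

lemma compatibleForm_apply_fv_sub_gv (v : AmbA k m) (l : Fin m) :
    compatibleForm k m v (fv k m l - gv k m l) = -(gramMatrix k m *ᵥ c3Eqns k m v) l := by
  set w := fv k m l - gv k m l
  have hz : zPart k m w = -Pi.single l 1 := by funext i; simp [w, zPart_apply, fv, gv]
  have hy : yPart k m w = Pi.single l 1 := by funext i; simp [w, yPart_apply, fv, gv]
  have hx : xInit k m w = 0 := by funext i; simp [w, xInit_apply, fv, gv]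
  have hc3 : c3Eqns k m w = 0 := by funext i; simp [w, c3Eqns_apply, fv, gv]
  have hX : xLast k m w = 0 := by simp [w, xLast_apply, fv, gv]
  rw [compatibleForm_apply, halfForm_apply, halfForm_apply, hz, hy, hx, hc3, hX]
  simp [mulVec_neg, col_dotProduct]

lemma compatibleForm_ev_zero_ev_last_ne_zero (h2 : (2 : k) ≠ 0) :
    compatibleForm k m (ev k m 0) (ev k m (Fin.last m)) ≠ 0 := by
  rcases m with _ | n
  · simpa [compatibleForm_apply, halfForm_apply, ev, xLast_apply, dotProduct, one_add_one_eq_two]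
      using h2
  · have hz (i) : zPart k (n + 1) (ev k (n + 1) i) = 0 := rfl
    have hy (i) : yPart k (n + 1) (ev k (n + 1) i) = 0 := rfl
    have hU : xInit k (n + 1) (ev k (n + 1) (Fin.last (n + 1))) = 0 := by
      funext i; simp [xInit_apply, ev, Fin.castSucc_ne_last]
    have hU₀ : xInit k (n + 1) (ev k (n + 1) 0) = Pi.single 0 1 := by
      funext i; simp [xInit_apply, ev, Pi.single_apply]
    have hc3 : c3Eqns k (n + 1) (ev k (n + 1) (Fin.last (n + 1)))
        = Pi.single (Fin.last n) 1 := by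
      funext i; simp [c3Eqns_apply, ev, Pi.single_apply]
    have hX : xLast k (n + 1) (ev k (n + 1) 0) = 0 := by
      simp [xLast_apply, ev]
    rw [compatibleForm_apply, halfForm_apply, halfForm_apply, hz, hz, hy, hy, hU, hU₀, hc3, hX]
    have hanti := gramEntry_antidiagonal (show (0 : ℤ) + n + 1 = (n + 1 : ℕ) by push_cast; ring)
    simp [gramMatrix, hanti, h2]

lemma forall_mem_IA1_iff (h2 : (2 : k) ≠ 0) (v : AmbA k m) :
    (∀ w ∈ IA1 k m, compatibleForm k m v w = 0) ↔ zPart k m v = 0 :=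
  forall_mem_span_range_eq_zero_iff _ _ _ one_ne_zero (det_gramMatrix_ne_zero h2)
    (fun v l => by rw [one_mul, compatibleForm_apply_ev_castSucc_sub_fv]) v

lemma forall_mem_IA2_iff (h2 : (2 : k) ≠ 0) (v : AmbA k m) :
    (∀ w ∈ IA2 k m, compatibleForm k m v w = 0) ↔ yPart k m v = 0 :=
  forall_mem_span_range_eq_zero_iff _ _ _ (by simp)
    (by rw [det_transpose]; exact det_gramMatrix_ne_zero h2) compatibleForm_apply_gv v

lemma forall_mem_IA3_iff (h2 : (2 : k) ≠ 0) (v : AmbA k m) :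
    (∀ w ∈ IA3 k m, compatibleForm k m v w = 0) ↔ c3Eqns k m v = 0 :=
  forall_mem_span_range_eq_zero_iff _ _ _ (neg_ne_zero.mpr one_ne_zero)
    (det_gramMatrix_ne_zero h2) (fun v l => by rw [neg_one_mul, compatibleForm_apply_fv_sub_gv]) v

lemma compatibleForm_nondegenerate (h2 : (2 : k) ≠ 0) :
    (compatibleForm k m).Nondegenerate := by
  refine compatibleForm_isRefl.nondegenerate_iff_separatingLeft.mpr fun v hv => ?_
  have hv₀ := eq_smul_ev_zero ((forall_mem_IA1_iff h2 v).mp fun w _ => hv w)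
    ((forall_mem_IA2_iff h2 v).mp fun w _ => hv w)
    ((forall_mem_IA3_iff h2 v).mp fun w _ => hv w)
  have hlast := hv (ev k m (Fin.last m))
  rw [hv₀, map_smul, LinearMap.smul_apply, smul_eq_mul] at hlast
  rw [hv₀, (mul_eq_zero.mp hlast).resolve_right (compatibleForm_ev_zero_ev_last_ne_zero h2),
    zero_smul]

end Form

end A3mPlus1

/-- Over a field `k` of characteristic `≠ 2`, the standard-basis
normal form of the discrete-type self-dual indecomposable sextuple `A(3m+1, 0)` admits
a compatible `(−1)^m`-symmetric form: a nondegenerate bilinear form `B` on the ambient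
space with `B(y, x) = (−1)^m B(x, y)` such that the `B`-orthogonal of `Iᵢ` is `Cᵢ` for
`i = 1, 2, 3`.  In particular, for `m` odd it admits a compatible symplectic form, and
for `m` even a compatible symmetric form. -/
theorem compatible_form_for_A_3m_plus_1
    {k : Type*} [Field k] (h2 : (2 : k) ≠ 0) (m : ℕ) :
    ∃ B : LinearMap.BilinForm k (AmbA k m),
      LinearMap.BilinForm.Nondegenerate B ∧
      (∀ x y : AmbA k m, B y x = (-1 : k) ^ m * B x y) ∧
      (∀ v : AmbA k m, (∀ w ∈ IA1 k m, B v w = 0) ↔ v ∈ CA1 k m) ∧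
      (∀ v : AmbA k m, (∀ w ∈ IA2 k m, B v w = 0) ↔ v ∈ CA2 k m) ∧
      (∀ v : AmbA k m, (∀ w ∈ IA3 k m, B v w = 0) ↔ v ∈ CA3 k m) := by
  open A3mPlus1 in
  exact ⟨compatibleForm k m, compatibleForm_nondegenerate h2, compatibleForm_symm,
    fun v => (forall_mem_IA1_iff h2 v).trans (mem_CA1_iff v).symm,
    fun v => (forall_mem_IA2_iff h2 v).trans (mem_CA2_iff v).symm,
    fun v => (forall_mem_IA3_iff h2 v).trans (mem_CA3_iff v).symm⟩
end
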